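/- arXiv:math/9704217 — 4 statements merged into one kernel-verified Lean document; each statement's English description precedes it below -/
import Mathlib

section
/- For a triangulation T of the cyclic polytope C(n,2) and an edge e = {i,j} with i < j spanned by vertices of C(n,2), the edge e is submerged by T (i.e., e ∈ sub₁(T)) if and only if there does not exist an edge e' = {k,l} of T with k < i < l < j. -/
open Finset

/-- The `i`-th point on the moment curve in `ℝ^d`: `(i, i², …, i^d)`. -/
def mompt (d i : ℕ) : Fin d → ℝ := fun k => (i : ℝ) ^ (k.1 + 1)

/-- The convex hull of the moment-curve points with labels in `S`; for `S = [n]` this is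
the cyclic polytope `C(n,d)`, and for small `S` it is the simplex spanned by `S`. -/
def simplexHull (d : ℕ) (S : Finset ℕ) : Set (Fin d → ℝ) :=
  convexHull ℝ (mompt d '' ↑S)

/-- Standard dot product on `Fin d → ℝ`. -/
def dotp {d : ℕ} (w x : Fin d → ℝ) : ℝ := ∑ k, w k * x k

/-- Two label sets span *admissible* simplices in dimension `d`: their geometric
intersection is a common (possibly empty) face of each, i.e. the convex hull of a common
subset of their vertices. -/
def Admissible (d : ℕ) (S₁ S₂ : Finset ℕ) : Prop :=
  ∃ R : Finset ℕ, R ⊆ S₁ ∧ R ⊆ S₂ ∧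
    simplexHull d S₁ ∩ simplexHull d S₂ = simplexHull d R

/-- A triangulation of the cyclic polytope with vertex set `V ⊆ ℕ` in dimension `d`,
identified with its set of maximal (`d`-dimensional) simplices. -/
structure TriangulationOn (d : ℕ) (V : Finset ℕ) where
  simps : Finset (Finset ℕ)
  subset_vertices : ∀ S ∈ simps, S ⊆ V
  card_eq : ∀ S ∈ simps, S.card = d + 1
  covers : (⋃ S ∈ simps, simplexHull d S) = simplexHull d V
  pairwise_admissible : ∀ S ∈ simps, ∀ S' ∈ simps, Admissible d S S'

/-- Triangulations of `C(n,d)`, on the vertex labels `[n] = {1,…,n}`. -/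
abbrev Triangulation (n d : ℕ) := TriangulationOn d (Finset.Icc 1 n)

/-- Deleting the last coordinate: the canonical projection `C(n,d+1) → C(n,d)`. -/
def projLast {d : ℕ} (y : Fin (d + 1) → ℝ) : Fin d → ℝ := fun k => y k.castSucc

/-- The last coordinate of a point of `ℝ^{d+1}`. -/
def lastc {d : ℕ} (y : Fin (d + 1) → ℝ) : ℝ := y (Fin.last d)

/-- The linear section over the simplex `S` lies weakly below the one over `S'`:
whenever points of the lifted simplices in `C(n,d+1)` project to the same point of
`C(n,d)`, the last coordinates compare. -/
def WeaklyLower (d : ℕ) (S S' : Finset ℕ) : Prop :=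
  ∀ y ∈ simplexHull (d + 1) S, ∀ z ∈ simplexHull (d + 1) S',
    projLast y = projLast z → lastc y ≤ lastc z

/-- The second higher Stasheff–Tamari order: the characteristic section of `T` lies
pointwise weakly below that of `T'`. -/
def le₂ {d : ℕ} {V : Finset ℕ} (T T' : TriangulationOn d V) : Prop :=
  ∀ S ∈ T.simps, ∀ S' ∈ T'.simps, WeaklyLower d S S'

/-- The simplex `σ` is submerged by the triangulation `T`: its linear section lies
weakly below the characteristic section of `T`. -/
def Submerged {d : ℕ} {V : Finset ℕ} (σ : Finset ℕ) (T : TriangulationOn d V) : Prop :=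
  ∀ S ∈ T.simps, WeaklyLower d σ S

/-- `F` spans a *lower facet* of the cyclic polytope on vertex set `V` in dimension `d`:
a facet visible from points with very negative last coordinate (outer normal with
negative last coordinate). -/
def IsLowerFacet (d : ℕ) (V F : Finset ℕ) : Prop :=
  F ⊆ V ∧ F.card = d ∧
  ∃ (hd : 0 < d) (w : Fin d → ℝ) (c : ℝ),
    w ⟨d - 1, Nat.sub_lt hd Nat.one_pos⟩ < 0 ∧
    (∀ i ∈ F, dotp w (mompt d i) = c) ∧
    (∀ i ∈ V \ F, dotp w (mompt d i) < c)

/-- `F` spans an *upper facet* of the cyclic polytope on vertex set `V` in dimension `d`. -/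
def IsUpperFacet (d : ℕ) (V F : Finset ℕ) : Prop :=
  F ⊆ V ∧ F.card = d ∧
  ∃ (hd : 0 < d) (w : Fin d → ℝ) (c : ℝ),
    0 < w ⟨d - 1, Nat.sub_lt hd Nat.one_pos⟩ ∧
    (∀ i ∈ F, dotp w (mompt d i) = c) ∧
    (∀ i ∈ V \ F, dotp w (mompt d i) < c)

/-- The lower facets of the `(k-1)`-simplex with vertex set `S̃` (gap criterion: erase a
vertex leaving an even gap, i.e. an even number of larger labels in `S̃`). -/
def lowerFacets (St : Finset ℕ) : Finset (Finset ℕ) :=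
  (St.filter fun i => Even ((St.filter fun j => i < j).card)).image St.erase

/-- The upper facets of the simplex with vertex set `S̃` (odd-gap criterion). -/
def upperFacets (St : Finset ℕ) : Finset (Finset ℕ) :=
  (St.filter fun i => Odd ((St.filter fun j => i < j).card)).image St.erase

/-- An increasing bistellar flip on sets of maximal simplices: replace the lower facets
of a `(d+1)`-simplex `S̃` of `C(n,d+1)` (all present) by its upper facets. -/
def IsFlip (n d : ℕ) (T T' : Finset (Finset ℕ)) : Prop :=
  ∃ St : Finset ℕ, St ⊆ Finset.Icc 1 n ∧ St.card = d + 2 ∧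
    lowerFacets St ⊆ T ∧ T' = (T \ lowerFacets St) ∪ upperFacets St

/-- The first higher Stasheff–Tamari order: transitive closure of increasing flips. -/
def le₁ {n d : ℕ} (T T' : Triangulation n d) : Prop :=
  Relation.ReflTransGen (IsFlip n d) T.simps T'.simps

/-- The minimal triangulation `0̂` of the cyclic polytope on vertex set `V` in dimension
`d`: the `(d+1)`-subsets of `V` all of whose gaps in `V` are even (the lower facets of
the cyclic polytope on `V` in dimension `d+1`). -/
def botOn (d : ℕ) (V : Finset ℕ) : Finset (Finset ℕ) :=
  (V.powersetCard (d + 1)).filter fun F =>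
    ∀ i ∈ V \ F, Even ((F.filter fun j => i < j).card)

/-- The maximal triangulation `1̂` (odd gaps / upper facets). -/
def topOn (d : ℕ) (V : Finset ℕ) : Finset (Finset ℕ) :=
  (V.powersetCard (d + 1)).filter fun F =>
    ∀ i ∈ V \ F, Odd ((F.filter fun j => i < j).card)

/-- The maximal simplices of the contraction `f(T) = del_T(n) ∪ del_{lk_T(n)}(n-1) ∗ {n-1}`
of a triangulation of `C(n,d)` to one of `C(n-1,d)`. -/
def fSimps (n : ℕ) (T : Finset (Finset ℕ)) : Finset (Finset ℕ) :=
  T.filter (fun S => n ∉ S) ∪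
    ((T.filter fun S => n ∈ S ∧ n - 1 ∉ S).image fun S => insert (n - 1) (S.erase n))

/-- The maximal simplices of `i(T) = T ∪ st_{0̂_{n,d}}(n)`. -/
def iSimps (n d : ℕ) (T : Finset (Finset ℕ)) : Finset (Finset ℕ) :=
  T ∪ (botOn d (Finset.Icc 1 n)).filter fun F => n ∈ F
/-- Auxiliary: a linear inequality (in the moment coordinates) valid at all vertices of a
simplex extends to its convex hull. -/
lemma hull_ineq (σ : Finset ℕ) (A B C D : ℝ)
    (hv : ∀ m ∈ σ, 0 ≤ A*(m:ℝ)^3 + B*(m:ℝ)^2 + C*(m:ℝ) + D) :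
    ∀ u ∈ simplexHull 3 σ, 0 ≤ A * u 2 + B * u 1 + C * u 0 + D := by
  intro u hu
  have hsub : mompt 3 '' ↑σ ⊆ {u : Fin 3 → ℝ | 0 ≤ A * u 2 + B * u 1 + C * u 0 + D} := by
    rintro _ ⟨m, hm, rfl⟩
    have := hv m (Finset.mem_coe.mp hm)
    simpa [mompt] using this
  have hconv : Convex ℝ {u : Fin 3 → ℝ | 0 ≤ A * u 2 + B * u 1 + C * u 0 + D} := by
    intro p hp q hq a b ha hb hab
    simp only [Set.mem_setOf_eq] at *
    have hb1 : b = 1 - a := by linarith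
    subst hb1
    simp only [Pi.add_apply, Pi.smul_apply, smul_eq_mul]
    nlinarith [mul_nonneg ha hp, mul_nonneg hb hq]
  exact convexHull_min hsub hconv hu

/-- Auxiliary: comparison of last coordinates via a cubic vanishing at `i` and `j` and
nonnegative on the vertices of `S`. -/
lemma edge_le (i j : ℕ) (B C D : ℝ)
    (hri : (i:ℝ)^3 + B*(i:ℝ)^2 + C*(i:ℝ) + D = 0)
    (hrj : (j:ℝ)^3 + B*(j:ℝ)^2 + C*(j:ℝ) + D = 0)
    (S : Finset ℕ) (hvS : ∀ m ∈ S, 0 ≤ (m:ℝ)^3 + B*(m:ℝ)^2 + C*(m:ℝ) + D)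
    (y : Fin 3 → ℝ) (hy : y ∈ simplexHull 3 ({i,j} : Finset ℕ))
    (z : Fin 3 → ℝ) (hz : z ∈ simplexHull 3 S)
    (h0 : y 0 = z 0) (h1 : y 1 = z 1) : y 2 ≤ z 2 := by
  have hz' := hull_ineq S 1 B C D (by intro m hm; have := hvS m hm; linarith) z hz
  have hroots : ∀ m ∈ ({i,j} : Finset ℕ), (m:ℝ)^3 + B*(m:ℝ)^2 + C*(m:ℝ) + D = 0 := by
    intro m hm
    rcases Finset.mem_insert.mp hm with rfl | hm
    · exact hri
    · rcases Finset.mem_singleton.mp hm with rfl; exact hrj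
  have hy1 := hull_ineq {i,j} 1 B C D (by intro m hm; have := hroots m hm; linarith) y hy
  have hy2 := hull_ineq {i,j} (-1) (-B) (-C) (-D)
    (by intro m hm; have := hroots m hm; linarith) y hy
  rw [h0, h1] at hy1 hy2
  linarith

/-- Auxiliary: convex combinations of two moment points lie in the simplex hull. -/
lemma seg_mem (σ : Finset ℕ) (a b : ℕ) (ha : a ∈ σ) (hb : b ∈ σ) (μ : ℝ)
    (h0 : 0 ≤ μ) (h1 : μ ≤ 1) :
    μ • mompt 3 a + (1-μ) • mompt 3 b ∈ simplexHull 3 σ :=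
  (convex_convexHull ℝ _)
    (subset_convexHull ℝ _ (Set.mem_image_of_mem _ (Finset.mem_coe.mpr ha)))
    (subset_convexHull ℝ _ (Set.mem_image_of_mem _ (Finset.mem_coe.mpr hb)))
    h0 (by linarith) (by ring)

/-- Auxiliary: the crossing point of two interleaved chords of the parabola, lifted to the
moment curve in `ℝ³`: the chord `{K,L}` passes strictly below the chord `{I,J}`. -/
lemma cross_lemma (I J K L : ℝ) (hKI : K < I) (hIL : I < L) (hLJ : L < J) :
    ∃ lam mu : ℝ, 0 ≤ lam ∧ lam ≤ 1 ∧ 0 ≤ mu ∧ mu ≤ 1 ∧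
      lam*I + (1-lam)*J = mu*K + (1-mu)*L ∧
      lam*I^2 + (1-lam)*J^2 = mu*K^2 + (1-mu)*L^2 ∧
      mu*K^3 + (1-mu)*L^3 < lam*I^3 + (1-lam)*J^3 := by
  have hIJ : I < J := hIL.trans hLJ
  have hD : (0:ℝ) < I + J - K - L := by linarith
  obtain ⟨t, ht_def⟩ : ∃ t : ℝ, t = (I*J - K*L)/(I+J-K-L) := ⟨_, rfl⟩
  have ht : t * (I+J-K-L) = I*J - K*L := by
    rw [ht_def]; field_simp
  have htI : I < t := by
    rw [ht_def, lt_div_iff₀ hD]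
    nlinarith [mul_pos (sub_pos.mpr hKI) (sub_pos.mpr hIL)]
  have htL : t < L := by
    rw [ht_def, div_lt_iff₀ hD]
    nlinarith [mul_pos (sub_pos.mpr hLJ) (sub_pos.mpr hIL)]
  have htJ : t < J := htL.trans hLJ
  have htK : K < t := hKI.trans htI
  have hJI : (0:ℝ) < J - I := by linarith
  have hLK : (0:ℝ) < L - K := by linarith
  obtain ⟨lam, hlam_def⟩ : ∃ lam : ℝ, lam = (J-t)/(J-I) := ⟨_, rfl⟩
  obtain ⟨mu, hmu_def⟩ : ∃ mu : ℝ, mu = (L-t)/(L-K) := ⟨_, rfl⟩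
  have hlam : lam*(J-I) = J - t := by rw [hlam_def]; field_simp
  have hmu : mu*(L-K) = L - t := by rw [hmu_def]; field_simp
  have hc1 : lam*I + (1-lam)*J = t := by linear_combination (-1 : ℝ)*hlam
  have hc1' : mu*K + (1-mu)*L = t := by linear_combination (-1 : ℝ)*hmu
  have hc2 : lam*I^2 + (1-lam)*J^2 = (I+J)*t - I*J := by
    linear_combination (-(I+J))*hlam
  have hc2' : mu*K^2 + (1-mu)*L^2 = (K+L)*t - K*L := by
    linear_combination (-(K+L))*hmu
  have hc3 : lam*I^3 + (1-lam)*J^3 = (I^2+I*J+J^2)*t - I*J*(I+J) := by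
    linear_combination (-(I^2+I*J+J^2))*hlam
  have hc3' : mu*K^3 + (1-mu)*L^3 = (K^2+K*L+L^2)*t - K*L*(K+L) := by
    linear_combination (-(K^2+K*L+L^2))*hmu
  have ht2 : (I+J)*t - I*J = (K+L)*t - K*L := by linear_combination ht
  have hPP : (t-K)*(L-t) = (t-I)*(J-t) := by linear_combination -ht2
  have hP : (0:ℝ) < (t-I)*(J-t) := mul_pos (by linarith) (by linarith)
  have hdiff : ((I^2+I*J+J^2)*t - I*J*(I+J)) - ((K^2+K*L+L^2)*t - K*L*(K+L))
      = (t-I)*(J-t)*(I+J-K-L) := by linear_combination (-(t+K+L)) * hPP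
  exact ⟨lam, mu,
    by rw [hlam_def]; exact div_nonneg (by linarith) (by linarith),
    by rw [hlam_def, div_le_one hJI]; linarith,
    by rw [hmu_def]; exact div_nonneg (by linarith) (by linarith),
    by rw [hmu_def, div_le_one hLK]; linarith,
    by rw [hc1, hc1'],
    by rw [hc2, hc2', ht2],
    by rw [hc3, hc3']; nlinarith [mul_pos hP hD]⟩

/-- for a triangulation `T` of `C(n,2)` and an edge `e = {i,j}`, `i < j`,
on vertices of `C(n,2)`, the edge is submerged by `T` iff no edge `{k,l}` of `T`
satisfies `k < i < l < j`. -/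
theorem stmt_9 (n : ℕ) (T : Triangulation n 2) (i j : ℕ)
    (hi : i ∈ Finset.Icc 1 n) (hj : j ∈ Finset.Icc 1 n) (hij : i < j) :
    Submerged {i, j} T ↔
      ¬ ∃ k l : ℕ, k < i ∧ i < l ∧ l < j ∧ ∃ S ∈ T.simps, k ∈ S ∧ l ∈ S := by
  constructor
  · -- forward: submerged → no crossing edge of `T`
    intro hsub
    rintro ⟨k, l, hki, hil, hlj, S, hS, hkS, hlS⟩
    have W := hsub S hS
    obtain ⟨lam, mu, hl0, hl1, hm0, hm1, e1, e2, e3⟩ :=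
      cross_lemma (i:ℝ) (j:ℝ) (k:ℝ) (l:ℝ)
        (by exact_mod_cast hki) (by exact_mod_cast hil) (by exact_mod_cast hlj)
    have hy := seg_mem {i,j} i j (Finset.mem_insert_self i {j}) (by simp) lam hl0 hl1
    have hz := seg_mem S k l hkS hlS mu hm0 hm1
    have hproj : projLast (lam • mompt 3 i + (1-lam) • mompt 3 j)
        = projLast (mu • mompt 3 k + (1-mu) • mompt 3 l) := by
      funext q
      fin_cases q
      · show lam*(i:ℝ)^1 + (1-lam)*(j:ℝ)^1 = mu*(k:ℝ)^1 + (1-mu)*(l:ℝ)^1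
        linear_combination e1
      · show lam*(i:ℝ)^2 + (1-lam)*(j:ℝ)^2 = mu*(k:ℝ)^2 + (1-mu)*(l:ℝ)^2
        linear_combination e2
    have hle := W _ hy _ hz hproj
    have hlt : lastc (mu • mompt 3 k + (1-mu) • mompt 3 l)
        < lastc (lam • mompt 3 i + (1-lam) • mompt 3 j) := e3
    exact absurd hle (not_le.mpr hlt)
  · -- backward: no crossing edge of `T` → submerged
    intro hno S hS y hy z hz hproj
    have h0 : y 0 = z 0 := congrFun hproj 0
    have h1 : y 1 = z 1 := congrFun hproj 1
    show y (Fin.last 2) ≤ z (Fin.last 2)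
    by_cases hex : ∃ l ∈ S, i < l ∧ l < j
    · -- some vertex of `S` lies strictly inside `(i,j)`; then all vertices are `≥ i`:
      -- use the cubic `(x-i)(x-j)²`
      obtain ⟨l, hlS, hil, hlj⟩ := hex
      have hge : ∀ m ∈ S, i ≤ m := by
        intro m hm
        by_contra hmi
        push_neg at hmi
        exact hno ⟨m, l, hmi, hil, hlj, S, hS, hm, hlS⟩
      exact edge_le i j (-((i:ℝ)+2*j)) (2*(i:ℝ)*j+(j:ℝ)^2) (-(i:ℝ)*(j:ℝ)^2)
        (by ring) (by ring) S
        (by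
          intro m hm
          have him : (i:ℝ) ≤ (m:ℝ) := by exact_mod_cast hge m hm
          nlinarith [mul_nonneg (sub_nonneg.mpr him) (sq_nonneg ((m:ℝ) - (j:ℝ)))])
        y hy z hz h0 h1
    · -- all vertices of `S` lie outside `(i,j)`: use the cubic `(x-i)(x-j)·x`
      push_neg at hex
      exact edge_le i j (-((i:ℝ)+(j:ℝ))) ((i:ℝ)*(j:ℝ)) 0
        (by ring) (by ring) S
        (by
          intro m hm
          have hm0 : (0:ℝ) ≤ (m:ℝ) := Nat.cast_nonneg m
          rcases le_or_gt m i with hmi | him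
          · have h1' : (m:ℝ) ≤ (i:ℝ) := by exact_mod_cast hmi
            have h2' : (m:ℝ) ≤ (j:ℝ) := by
              have : m ≤ j := le_trans hmi (le_of_lt hij)
              exact_mod_cast this
            nlinarith [mul_nonneg (mul_nonneg (sub_nonneg.mpr h1') hm0) (sub_nonneg.mpr h2')]
          · have hjm : j ≤ m := hex m hm him
            have h1' : (i:ℝ) ≤ (m:ℝ) := by
              have : i ≤ m := le_trans (le_of_lt hij) hjm
              exact_mod_cast this
            have h2' : (j:ℝ) ≤ (m:ℝ) := by exact_mod_cast hjm
            nlinarith [mul_nonneg (mul_nonneg (sub_nonneg.mpr h1') hm0) (sub_nonneg.mpr h2')])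
        y hy z hz h0 h1
end

section
/- For any two triangulations T₁, T₂ of the cyclic polytope C(n,d), T₁ ≤ T₂ in the second higher Stasheff–Tamari order if and only if sub_⌈d/2⌉(T₁) ⊆ sub_⌈d/2⌉(T₂), where sub_i(T) is the set of i-simplices (on vertices of C(n,d)) submerged by T. -/
open Finset

section Aux
open Polynomial

/-- moment-poly tool -/
lemma moment_poly (d : ℕ) (E : Finset ℕ) (v : ℕ → ℝ)
    (hm : ∀ k ≤ d, ∑ i ∈ E, v i * (i:ℝ)^k = 0)
    (p : Polynomial ℝ) (hp : p.natDegree ≤ d) :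
    ∑ i ∈ E, v i * p.eval (i:ℝ) = 0 := by
  have h1 : ∀ i : ℕ, p.eval (i:ℝ) = ∑ k ∈ Finset.range (d+1), p.coeff k * (i:ℝ)^k := by
    intro i
    rw [eval_eq_sum_range' (Nat.lt_succ_of_le hp)]
  calc ∑ i ∈ E, v i * p.eval (i:ℝ)
      = ∑ i ∈ E, ∑ k ∈ Finset.range (d+1), v i * (p.coeff k * (i:ℝ)^k) := by
        apply Finset.sum_congr rfl; intro i _
        rw [h1 i, Finset.mul_sum]
    _ = ∑ k ∈ Finset.range (d+1), p.coeff k * ∑ i ∈ E, v i * (i:ℝ)^k := by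
        rw [Finset.sum_comm]
        apply Finset.sum_congr rfl; intro k _
        rw [Finset.mul_sum]
        apply Finset.sum_congr rfl; intro i _; ring
    _ = 0 := by
        apply Finset.sum_eq_zero; intro k hk
        rw [hm k (by simpa [Nat.lt_succ_iff] using hk), mul_zero]

/-- affine independence / Vandermonde -/
lemma vand_zero (d : ℕ) (E : Finset ℕ) (hE : E.card ≤ d + 1) (v : ℕ → ℝ)
    (h0 : ∀ i ∉ E, v i = 0)
    (hm : ∀ k ≤ d, ∑ i ∈ E, v i * (i:ℝ)^k = 0) : ∀ j, v j = 0 := by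
  intro j
  by_cases hj : j ∈ E
  · set g : Polynomial ℝ := ∏ i ∈ E.erase j, (X - C (i:ℝ)) with hg
    have hdeg : g.natDegree ≤ d := by
      rw [hg, natDegree_prod _ _ (fun i _ => X_sub_C_ne_zero _)]
      simp only [natDegree_X_sub_C, Finset.sum_const, smul_eq_mul, mul_one]
      have := Finset.card_erase_of_mem hj
      omega
    have hz := moment_poly d E v hm g hdeg
    have hsingle : ∑ i ∈ E, v i * g.eval (i:ℝ) = v j * g.eval (j:ℝ) := by
      apply Finset.sum_eq_single_of_mem j hj
      intro i hi hne
      have : g.eval (i:ℝ) = 0 := by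
        rw [hg, eval_prod]
        apply Finset.prod_eq_zero (Finset.mem_erase.2 ⟨hne, hi⟩)
        simp
      rw [this, mul_zero]
    have hgj : g.eval (j:ℝ) ≠ 0 := by
      rw [hg, eval_prod]
      apply Finset.prod_ne_zero_iff.2
      intro i hi
      simp only [eval_sub, eval_X, eval_C, sub_ne_zero]
      exact_mod_cast fun h => (Finset.mem_erase.1 hi).1 (by exact_mod_cast h.symm)
    have := hz.symm.trans hsingle |>.symm
    exact (mul_eq_zero.1 this).resolve_right hgj
  · exact h0 j hj

lemma lemB (d : ℕ) (A : Finset ℕ) (v : ℕ → ℝ)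
    (hA : ∀ i ∉ A, v i = 0)
    (hcard : (A.filter (fun i => v i ≠ 0)).card ≤ d + 2)
    (hm : ∀ k ≤ d, ∑ i ∈ A, v i * (i:ℝ)^k = 0)
    (hq : 0 < ∑ i ∈ A, v i * (i:ℝ)^(d+1)) :
    (A.filter (fun i => 0 < v i)).card ≤ (d+1)/2 + 1 := by
  classical
  set P := A.filter (fun i => 0 < v i) with hP
  set N := A.filter (fun i => v i < 0) with hN
  have hPne : P.Nonempty := by
    have h0 : (0:ℝ) < ∑ i ∈ A, v i * (i:ℝ)^(d+1) := hq
    have : ∃ i ∈ A, (0:ℝ) < v i * (i:ℝ)^(d+1) := by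
      by_contra h
      push_neg at h
      have : ∑ i ∈ A, v i * (i:ℝ)^(d+1) ≤ 0 := Finset.sum_nonpos h
      linarith
    obtain ⟨i, hi, h⟩ := this
    refine ⟨i, Finset.mem_filter.2 ⟨hi, ?_⟩⟩
    by_contra h2
    push_neg at h2
    nlinarith [pow_nonneg (Nat.cast_nonneg i : (0:ℝ) ≤ i) (d+1)]
  have hPN : P.card + N.card ≤ d + 2 := by
    have hdisj : Disjoint P N := by
      rw [Finset.disjoint_left]
      intro i hiP hiN
      have h1 := (Finset.mem_filter.1 hiP).2
      have h2 := (Finset.mem_filter.1 hiN).2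
      linarith
    have hsub : P ∪ N ⊆ A.filter (fun i => v i ≠ 0) := by
      intro i hi
      rcases Finset.mem_union.1 hi with h | h
      · obtain ⟨h1, h2⟩ := Finset.mem_filter.1 h
        exact Finset.mem_filter.2 ⟨h1, ne_of_gt h2⟩
      · obtain ⟨h1, h2⟩ := Finset.mem_filter.1 h
        exact Finset.mem_filter.2 ⟨h1, ne_of_lt h2⟩
    calc P.card + N.card = (P ∪ N).card := (Finset.card_union_of_disjoint hdisj).symm
      _ ≤ _ := Finset.card_le_card hsub
      _ ≤ d + 2 := hcard
  by_contra hbig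
  push_neg at hbig
  have hNd : 2 * N.card ≤ d := by omega
  set g : Polynomial ℝ := -∏ s ∈ N, (Polynomial.X - Polynomial.C (s:ℝ))^2 with hg
  have hdeg : g.natDegree ≤ d := by
    rw [hg, Polynomial.natDegree_neg,
      Polynomial.natDegree_prod _ _ (fun i _ => pow_ne_zero _ (Polynomial.X_sub_C_ne_zero _))]
    simp only [Polynomial.natDegree_pow, Polynomial.natDegree_X_sub_C, mul_one]
    simp only [Finset.sum_const, smul_eq_mul]
    omega
  have hz := moment_poly d A v hm g hdeg
  have hsplit : ∑ i ∈ A, v i * g.eval (i:ℝ) = ∑ i ∈ P, v i * g.eval (i:ℝ) := by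
    symm
    apply Finset.sum_subset (Finset.filter_subset _ _)
    intro x hx hxP
    rcases lt_trichotomy (v x) 0 with h | h | h
    · have hxN : x ∈ N := Finset.mem_filter.2 ⟨hx, h⟩
      have : g.eval (x:ℝ) = 0 := by
        rw [hg]
        simp only [Polynomial.eval_neg, Polynomial.eval_prod, Polynomial.eval_pow,
          Polynomial.eval_sub, Polynomial.eval_X, Polynomial.eval_C, neg_eq_zero]
        exact Finset.prod_eq_zero hxN (by simp)
      rw [this, mul_zero]
    · rw [h, zero_mul]
    · exact absurd (Finset.mem_filter.2 ⟨hx, h⟩) hxP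
  have hneg : ∑ i ∈ P, v i * g.eval (i:ℝ) < 0 := by
    apply Finset.sum_neg
    · intro i hi
      obtain ⟨hiA, hiv⟩ := Finset.mem_filter.1 hi
      have hge : g.eval (i:ℝ) < 0 := by
        rw [hg]
        simp only [Polynomial.eval_neg, Polynomial.eval_prod, Polynomial.eval_pow,
          Polynomial.eval_sub, Polynomial.eval_X, Polynomial.eval_C, neg_neg, neg_lt, neg_zero]
        apply Finset.prod_pos
        intro s hs
        have hsv : v s < 0 := (Finset.mem_filter.1 hs).2
        have : (i:ℝ) ≠ (s:ℝ) := by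
          intro h
          have : i = s := by exact_mod_cast h
          subst this
          linarith
        exact pow_two_pos_of_ne_zero (sub_ne_zero.2 this)
      nlinarith
    · exact hPne
  rw [hsplit] at hz
  linarith

lemma mompt_inj (D : ℕ) (hD : 0 < D) : Function.Injective (mompt D) := by
  intro a b h
  have := congrFun h ⟨0, hD⟩
  simpa [mompt] using this

/-- combo → membership, any D -/
lemma mem_simplexHull_of_combo (D : ℕ) (S : Finset ℕ) (w : ℕ → ℝ)
    (hw0 : ∀ i, 0 ≤ w i) (hws : ∑ i ∈ S, w i = 1)
    (x : Fin D → ℝ) (hx : ∀ k : Fin D, x k = ∑ i ∈ S, w i * (i:ℝ)^(k.1+1)) :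
    x ∈ simplexHull D S := by
  have h := Finset.centerMass_mem_convexHull (t := S) (w := w) (z := fun i => mompt D i)
    (fun i _ => hw0 i) (by rw [hws]; norm_num)
    (fun i hi => Set.mem_image_of_mem _ (by exact_mod_cast hi))
  have : S.centerMass w (fun i => mompt D i) = x := by
    rw [Finset.centerMass_eq_of_sum_1 _ _ hws]
    funext k
    rw [hx k]
    rw [Finset.sum_apply]
    apply Finset.sum_congr rfl; intro i _
    simp [mompt]
  rwa [this] at h

/-- membership → combo, D positive -/
lemma combo_of_mem_simplexHull (D : ℕ) (hD : 0 < D) (S : Finset ℕ) (x : Fin D → ℝ)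
    (hx : x ∈ simplexHull D S) :
    ∃ w : ℕ → ℝ, (∀ i, 0 ≤ w i) ∧ (∀ i ∉ S, w i = 0) ∧ ∑ i ∈ S, w i = 1 ∧
      ∀ k : Fin D, x k = ∑ i ∈ S, w i * (i:ℝ)^(k.1+1) := by
  have himg : mompt D '' ↑S = ↑(S.image (mompt D)) := by
    rw [Finset.coe_image]
  rw [simplexHull, himg, Finset.convexHull_eq] at hx
  obtain ⟨ω, hω0, hω1, hωc⟩ := hx
  have hinj : ∀ a ∈ S, ∀ b ∈ S, mompt D a = mompt D b → a = b :=
    fun a _ b _ h => mompt_inj D hD h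
  refine ⟨fun i => if i ∈ S then ω (mompt D i) else 0, ?_, ?_, ?_, ?_⟩
  · intro i
    by_cases hi : i ∈ S
    · simp only [if_pos hi]
      exact hω0 _ (Finset.mem_image_of_mem _ hi)
    · simp [hi]
  · intro i hi; simp [hi]
  · rw [Finset.sum_image hinj (f := ω)] at hω1
    rw [← hω1]
    apply Finset.sum_congr rfl; intro i hi; simp [hi]
  · intro k
    have := hωc
    rw [Finset.centerMass_eq_of_sum_1 _ _ hω1] at this
    rw [← this, Finset.sum_apply]
    rw [Finset.sum_image hinj (f := fun p => (ω p • (id p : Fin D → ℝ)) k)]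
    apply Finset.sum_congr rfl; intro i hi
    simp [hi, mompt, mul_comm]

lemma simplexHull_mono (D : ℕ) {S S' : Finset ℕ} (h : S ⊆ S') :
    simplexHull D S ⊆ simplexHull D S' :=
  convexHull_mono (Set.image_mono (by exact_mod_cast h))

lemma projLast_mem (d : ℕ) (S : Finset ℕ) (y : Fin (d+1) → ℝ)
    (hy : y ∈ simplexHull (d+1) S) : projLast y ∈ simplexHull d S := by
  obtain ⟨w, hw0, _, hws, hwc⟩ := combo_of_mem_simplexHull (d+1) (Nat.succ_pos d) S y hy
  apply mem_simplexHull_of_combo d S w hw0 hws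
  intro k
  rw [projLast, hwc k.castSucc]
  rfl

lemma exists_lift (d : ℕ) (S : Finset ℕ) (x : Fin d → ℝ)
    (hx : x ∈ simplexHull d S) :
    ∃ y, y ∈ simplexHull (d+1) S ∧ projLast y = x := by
  rcases Nat.eq_zero_or_pos d with hd | hd
  · subst hd
    have hS : S.Nonempty := by
      rcases S.eq_empty_or_nonempty with h | h
      · exfalso
        rw [simplexHull, h] at hx
        simp at hx
      · exact h
    obtain ⟨i, hi⟩ := hS
    refine ⟨mompt 1 i, subset_convexHull ℝ _ (Set.mem_image_of_mem _ (by exact_mod_cast hi)), ?_⟩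
    funext k
    exact k.elim0
  · obtain ⟨w, hw0, _, hws, hwc⟩ := combo_of_mem_simplexHull d hd S x hx
    refine ⟨fun k => ∑ i ∈ S, w i * (i:ℝ)^(k.1+1), ?_, ?_⟩
    · exact mem_simplexHull_of_combo (d+1) S w hw0 hws _ (fun k => rfl)
    · funext k
      rw [projLast, hwc k]
      rfl

def Conf (v w : ℕ → ℝ) : Prop :=
  ∀ i, (v i = 0 → w i = 0) ∧ (0 ≤ v i → 0 ≤ w i) ∧ (v i ≤ 0 → w i ≤ 0)

lemma Conf.refl (v : ℕ → ℝ) : Conf v v := fun i => ⟨id, id, id⟩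

lemma Conf.trans {u v w : ℕ → ℝ} (h1 : Conf u v) (h2 : Conf v w) : Conf u w := by
  intro i
  exact ⟨fun h => (h2 i).1 ((h1 i).1 h), fun h => (h2 i).2.1 ((h1 i).2.1 h),
    fun h => (h2 i).2.2 ((h1 i).2.2 h)⟩

/-- existence of a nonzero dependence on d+2 points -/
lemma exists_dependence (d : ℕ) (F' : Finset ℕ) (hF : F'.card = d + 2) :
    ∃ w : ℕ → ℝ, (∃ j ∈ F', w j ≠ 0) ∧ (∀ j, w j ≠ 0 → j ∈ F') ∧
      ∀ k ≤ d, ∑ i ∈ F', w i * (i:ℝ)^k = 0 := by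
  set g : F' → (Fin (d+1) → ℝ) := fun i k => (i.1:ℝ)^(k.1) with hg
  have hnli : ¬ LinearIndependent ℝ g := by
    intro h
    have := LinearIndependent.fintype_card_le_finrank (R := ℝ) (M := Fin (d+1) → ℝ) h
    rw [Module.finrank_pi, Fintype.card_coe, hF, Fintype.card_fin] at this
    omega
  obtain ⟨u, hu0, j₀, hj₀⟩ := Fintype.not_linearIndependent_iff.1 hnli
  refine ⟨fun j => if h : j ∈ F' then u ⟨j, h⟩ else 0, ⟨j₀, j₀.2, by simp [j₀.2, hj₀]⟩,
    ?_, ?_⟩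
  · intro j hj
    by_contra h
    simp [h] at hj
  · intro k hk
    have h1 : ∑ i ∈ F', (if h : i ∈ F' then u ⟨i, h⟩ else 0) * (i:ℝ)^k
        = ∑ i : F', u i * (i.1:ℝ)^k := by
      rw [← Finset.sum_coe_sort]
      apply Finset.sum_congr rfl; intro i _
      simp [i.2]
    rw [h1]
    have := congrFun hu0 ⟨k, by omega⟩
    rw [Finset.sum_apply] at this
    simpa [hg] using this

/-- line search -/
lemma line_search (A : Finset ℕ) (v u : ℕ → ℝ)
    (hA : ∀ i ∉ A, v i = 0)
    (husupp : ∀ j, u j ≠ 0 → v j ≠ 0)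
    (hop : ∃ i ∈ A, v i * u i < 0) :
    ∃ i₀ ∈ A, v i₀ ≠ 0 ∧ ∃ t : ℝ, 0 < t ∧ v i₀ + t * u i₀ = 0 ∧
      Conf v (fun j => v j + t * u j) := by
  classical
  set G := A.filter (fun i => v i * u i < 0) with hG
  have hGne : G.Nonempty := by
    obtain ⟨i, hi, hvi⟩ := hop
    exact ⟨i, Finset.mem_filter.2 ⟨hi, hvi⟩⟩
  obtain ⟨i₀, hi₀G, hmin⟩ := Finset.exists_min_image G (fun i => -v i / u i) hGne
  have hi₀ : v i₀ * u i₀ < 0 := (Finset.mem_filter.1 hi₀G).2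
  have hu₀ : u i₀ ≠ 0 := fun h => by simp [h] at hi₀
  have hv₀ : v i₀ ≠ 0 := fun h => by simp [h] at hi₀
  set t := -v i₀ / u i₀ with ht
  have htpos : 0 < t := by
    rw [ht, neg_div]
    have : v i₀ / u i₀ < 0 := div_neg_iff.2 (by
      rcases mul_neg_iff.1 hi₀ with ⟨h1, h2⟩ | ⟨h1, h2⟩
      · exact Or.inl ⟨h1, h2⟩
      · exact Or.inr ⟨h1, h2⟩)
    linarith
  have hzero : v i₀ + t * u i₀ = 0 := by
    rw [ht]; field_simp; ring
  refine ⟨i₀, (Finset.mem_filter.1 hi₀G).1, hv₀, t, htpos, hzero, ?_⟩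
  intro j
  refine ⟨?_, ?_, ?_⟩
  · intro hvj
    have huj : u j = 0 := by
      by_contra h
      exact husupp j h hvj
    simp [hvj, huj]
  · intro hvj
    show 0 ≤ v j + t * u j
    rcases eq_or_lt_of_le hvj with h | h
    · have hvj0 : v j = 0 := h.symm
      have huj : u j = 0 := by
        by_contra h2
        exact husupp j h2 hvj0
      simp [hvj0, huj]
    · rcases le_or_gt 0 (u j) with hu | hu
      · have : 0 ≤ t * u j := mul_nonneg htpos.le hu
        linarith
      · have hjG : j ∈ G := Finset.mem_filter.2 ⟨by
          by_contra h2
          rw [hA j h2] at h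
          exact lt_irrefl _ h, mul_neg_of_pos_of_neg h hu⟩
        have := hmin j hjG
        -- t ≤ -v j / u j, u j < 0 ⟹ t * u j ≥ -v j
        have h2 : t * u j ≥ (-v j / u j) * u j := by
          apply mul_le_mul_of_nonpos_right this hu.le
        rw [div_mul_cancel₀ _ (ne_of_lt hu)] at h2
        linarith
  · intro hvj
    show v j + t * u j ≤ 0
    rcases eq_or_lt_of_le hvj with h | h
    · have hvj0 : v j = 0 := h
      have huj : u j = 0 := by
        by_contra h2
        exact husupp j h2 hvj0
      simp [hvj0, huj]
    · rcases le_or_gt (u j) 0 with hu | hu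
      · have : t * u j ≤ 0 := mul_nonpos_of_nonneg_of_nonpos htpos.le hu
        linarith
      · have hjG : j ∈ G := Finset.mem_filter.2 ⟨by
          by_contra h2
          rw [hA j h2] at h
          exact lt_irrefl _ h, mul_neg_of_neg_of_pos h hu⟩
        have := hmin j hjG
        have h2 : t * u j ≤ (-v j / u j) * u j :=
          mul_le_mul_of_nonneg_right this hu.le
        rw [div_mul_cancel₀ _ (ne_of_gt hu)] at h2
        linarith

lemma lemA (d : ℕ) (A : Finset ℕ) : ∀ n : ℕ, ∀ v : ℕ → ℝ,
    (A.filter (fun i => v i ≠ 0)).card ≤ n →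
    (∀ i ∉ A, v i = 0) →
    (∀ k ≤ d, ∑ i ∈ A, v i * (i:ℝ)^k = 0) →
    0 < ∑ i ∈ A, v i * (i:ℝ)^(d+1) →
    ∃ v' : ℕ → ℝ, Conf v v' ∧ (A.filter (fun i => v' i ≠ 0)).card ≤ d+2 ∧
      (∀ k ≤ d, ∑ i ∈ A, v' i * (i:ℝ)^k = 0) ∧ 0 < ∑ i ∈ A, v' i * (i:ℝ)^(d+1) := by
  intro n
  induction n with
  | zero =>
    intro v hcard hA hm hq
    exact ⟨v, Conf.refl v, le_trans hcard (Nat.zero_le _), hm, hq⟩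
  | succ n ih =>
    intro v hcard hA hm hq
    set F := A.filter (fun i => v i ≠ 0) with hF
    rcases le_or_gt F.card (d+2) with hsmall | hbig
    · exact ⟨v, Conf.refl v, hsmall, hm, hq⟩
    obtain ⟨F', hF'sub, hF'card⟩ := Finset.exists_subset_card_eq (le_of_lt hbig)
    obtain ⟨w, ⟨j₀, hj₀F', hj₀w⟩, hwsupp, hwm⟩ := exists_dependence d F' hF'card
    have hF'A : F' ⊆ A := hF'sub.trans (Finset.filter_subset _ _)
    have hwsuppv : ∀ j, w j ≠ 0 → v j ≠ 0 := fun j h =>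
      (Finset.mem_filter.1 (hF'sub (hwsupp j h))).2
    have hw0 : ∀ j, v j = 0 → w j = 0 := by
      intro j hv; by_contra h; exact hwsuppv j h hv
    have hwmA : ∀ k ≤ d, ∑ i ∈ A, w i * (i:ℝ)^k = 0 := by
      intro k hk
      rw [← hwm k hk]
      symm
      apply Finset.sum_subset hF'A
      intro x _ hx
      rw [by_contra (fun h => hx (hwsupp x h)) , zero_mul]
    set c := ∑ i ∈ A, w i * (i:ℝ)^(d+1) with hc
    have hj₀A : j₀ ∈ A := hF'A hj₀F'
    have hvj₀ : v j₀ ≠ 0 := hwsuppv j₀ hj₀w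
    -- the recursive "search" step
    have key : ∀ u : ℕ → ℝ, (∀ j, u j ≠ 0 → v j ≠ 0) →
        (∃ i ∈ A, v i * u i < 0) →
        (∀ k ≤ d, ∑ i ∈ A, u i * (i:ℝ)^k = 0) →
        0 ≤ ∑ i ∈ A, u i * (i:ℝ)^(d+1) →
        ∃ v' : ℕ → ℝ, Conf v v' ∧ (A.filter (fun i => v' i ≠ 0)).card ≤ d+2 ∧
          (∀ k ≤ d, ∑ i ∈ A, v' i * (i:ℝ)^k = 0) ∧
          0 < ∑ i ∈ A, v' i * (i:ℝ)^(d+1) := by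
      intro u husupp hop hum huq
      obtain ⟨i₀, hi₀A, hvi₀, t, htpos, hzero, hconf⟩ := line_search A v u hA husupp hop
      set v'' : ℕ → ℝ := fun j => v j + t * u j with hv''
      have hsum : ∀ f : ℕ → ℝ, ∑ i ∈ A, v'' i * f i
          = (∑ i ∈ A, v i * f i) + t * ∑ i ∈ A, u i * f i := by
        intro f
        rw [Finset.mul_sum, ← Finset.sum_add_distrib]
        apply Finset.sum_congr rfl; intro i _; simp [hv'']; ring
      have hA'' : ∀ i ∉ A, v'' i = 0 := by
        intro i hi
        have hv : v i = 0 := hA i hi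
        have hu : u i = 0 := by
          by_contra h
          exact husupp i h hv
        simp [hv'', hv, hu]
      have hm'' : ∀ k ≤ d, ∑ i ∈ A, v'' i * (i:ℝ)^k = 0 := by
        intro k hk
        rw [hsum, hm k hk, hum k hk, mul_zero, add_zero]
      have hq'' : 0 < ∑ i ∈ A, v'' i * (i:ℝ)^(d+1) := by
        rw [hsum]
        have := mul_nonneg htpos.le huq
        linarith
      have hcard'' : (A.filter (fun i => v'' i ≠ 0)).card ≤ n := by
        have hsub : A.filter (fun i => v'' i ≠ 0) ⊆ F.erase i₀ := by
          intro j hj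
          obtain ⟨hjA, hjv⟩ := Finset.mem_filter.1 hj
          refine Finset.mem_erase.2 ⟨?_, Finset.mem_filter.2 ⟨hjA, ?_⟩⟩
          · intro h; subst h; exact hjv hzero
          · intro h; exact hjv ((hconf j).1 h)
        have h1 := Finset.card_le_card hsub
        have h2 : i₀ ∈ F := Finset.mem_filter.2 ⟨hi₀A, hvi₀⟩
        rw [Finset.card_erase_of_mem h2] at h1
        omega
      obtain ⟨v', hconf', hcard', hm', hq'⟩ := ih v'' hcard'' hA'' hm'' hq''
      exact ⟨v', Conf.trans hconf hconf', hcard', hm', hq'⟩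
    by_cases hcpos : 0 ≤ c
    · by_cases hP : ∃ i ∈ A, v i * w i < 0
      · exact key w hwsuppv hP hwmA hcpos
      · push_neg at hP
        have hj₀pos : 0 < v j₀ * w j₀ := lt_of_le_of_ne (hP j₀ hj₀A) (by
          intro h
          rcases mul_eq_zero.1 h.symm with h | h
          exacts [hvj₀ h, hj₀w h])
        by_cases hc0 : c = 0
        · apply key (fun j => -w j)
          · intro j h; exact hwsuppv j (by simpa using h)
          · exact ⟨j₀, hj₀A, by simp; nlinarith⟩
          · intro k hk; simp [neg_mul, Finset.sum_neg_distrib, hwmA k hk]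
          · simp only [neg_mul, Finset.sum_neg_distrib, ← hc, hc0]; simp
        · -- c > 0 : take v' = w
          have hcpos' : 0 < c := lt_of_le_of_ne hcpos (Ne.symm hc0)
          refine ⟨w, ?_, ?_, hwmA, by rw [← hc]; exact hcpos'⟩
          · intro i
            refine ⟨hw0 i, ?_, ?_⟩
            · intro hvi
              rcases eq_or_lt_of_le hvi with h | h
              · rw [hw0 i h.symm]
              · by_cases hiA : i ∈ A
                · have := hP i hiA
                  by_contra hneg; push_neg at hneg; nlinarith
                · rw [hw0 i (hA i hiA)]
            · intro hvi
              rcases eq_or_lt_of_le hvi with h | h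
              · rw [hw0 i h]
              · by_cases hiA : i ∈ A
                · have := hP i hiA
                  by_contra hneg; push_neg at hneg; nlinarith
                · rw [hw0 i (hA i hiA)]
          · calc (A.filter (fun i => w i ≠ 0)).card ≤ F'.card :=
                Finset.card_le_card (fun j hj => hwsupp j (Finset.mem_filter.1 hj).2)
              _ = d + 2 := hF'card
    · by_cases hN : ∃ i ∈ A, 0 < v i * w i
      · apply key (fun j => -w j)
        · intro j h; exact hwsuppv j (by simpa using h)
        · obtain ⟨i, hi, h⟩ := hN; exact ⟨i, hi, by simp; nlinarith⟩
        · intro k hk; simp [neg_mul, Finset.sum_neg_distrib, hwmA k hk]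
        · simp only [neg_mul, Finset.sum_neg_distrib, ← hc]; linarith
      · push_neg at hN
        push_neg at hcpos
        refine ⟨fun j => -w j, ?_, ?_, ?_, ?_⟩
        · intro i
          refine ⟨fun h => by show -w i = 0; rw [hw0 i h]; ring, ?_, ?_⟩
          · intro hvi
            show 0 ≤ -w i
            rcases eq_or_lt_of_le hvi with h | h
            · rw [hw0 i h.symm]; simp
            · by_cases hiA : i ∈ A
              · have := hN i hiA
                by_contra hneg; push_neg at hneg; nlinarith
              · rw [hw0 i (hA i hiA)]; simp
          · intro hvi
            show -w i ≤ 0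
            rcases eq_or_lt_of_le hvi with h | h
            · rw [hw0 i h]; simp
            · by_cases hiA : i ∈ A
              · have := hN i hiA
                by_contra hneg; push_neg at hneg; nlinarith
              · rw [hw0 i (hA i hiA)]; simp
        · calc (A.filter (fun i => -w i ≠ 0)).card ≤ F'.card :=
              Finset.card_le_card (fun j hj => hwsupp j (by
                have := (Finset.mem_filter.1 hj).2
                simpa using this))
            _ = d + 2 := hF'card
        · intro k hk; simp [neg_mul, Finset.sum_neg_distrib, hwmA k hk]
        · simp only [neg_mul, Finset.sum_neg_distrib, ← hc]; linarith

lemma carrier_sum (S T : Finset ℕ) (hTS : T ⊆ S) (w : ℕ → ℝ)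
    (hw : ∀ i ∉ T, w i = 0) (f : ℕ → ℝ) :
    ∑ i ∈ S, w i * f i = ∑ i ∈ T, w i * f i :=
  (Finset.sum_subset hTS (fun x _ hx => by rw [hw x hx, zero_mul])).symm

lemma face_submerged {d : ℕ} {V : Finset ℕ} (T : TriangulationOn d V)
    {S τ : Finset ℕ} (hS : S ∈ T.simps) (hτ : τ ⊆ S) : Submerged τ T := by
  intro S'' hS'' y hy z hz hpr
  obtain ⟨R, hRS, hRS'', hR⟩ := T.pairwise_admissible S hS S'' hS''
  have hxS : projLast y ∈ simplexHull d S :=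
    simplexHull_mono d hτ (projLast_mem d τ y hy)
  have hxS'' : projLast y ∈ simplexHull d S'' := by
    rw [hpr]; exact projLast_mem d S'' z hz
  have hxR : projLast y ∈ simplexHull d R := by
    rw [← hR]; exact ⟨hxS, hxS''⟩
  have hcardS : S.card = d + 1 := T.card_eq S hS
  have hcardS'' : S''.card = d + 1 := T.card_eq S'' hS''
  rcases Nat.eq_zero_or_pos d with hd | hd
  · -- degenerate dimension 0
    subst hd
    have hRne : R.Nonempty := by
      rcases R.eq_empty_or_nonempty with h | h
      · exfalso
        rw [h] at hxR
        simp [simplexHull] at hxR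
      · exact h
    obtain ⟨a, haR⟩ := hRne
    have hSa : ({a} : Finset ℕ) = S :=
      Finset.eq_of_subset_of_card_le (Finset.singleton_subset_iff.2 (hRS haR))
        (by rw [hcardS]; simp)
    have hτa : τ = ∅ ∨ τ = {a} := by
      have : τ ⊆ ({a} : Finset ℕ) := by rw [hSa]; exact hτ
      exact Finset.subset_singleton_iff.1 this
    rcases hτa with h | h
    · exfalso
      rw [h] at hy
      simp [simplexHull] at hy
    have hS''a : ({a} : Finset ℕ) = S'' :=
      Finset.eq_of_subset_of_card_le (Finset.singleton_subset_iff.2 (hRS'' haR))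
        (by rw [hcardS'']; simp)
    have hya : y = mompt 1 a := by
      have : simplexHull 1 τ = {mompt 1 a} := by
        rw [h, simplexHull]
        simp only [Finset.coe_singleton, Set.image_singleton]
        exact convexHull_singleton _
      rw [this] at hy
      exact hy
    have hza : z = mompt 1 a := by
      have : simplexHull 1 S'' = {mompt 1 a} := by
        rw [← hS''a, simplexHull]
        simp only [Finset.coe_singleton, Set.image_singleton]
        exact convexHull_singleton _
      rw [this] at hz
      exact hz
    rw [hya, hza]
  · -- main case
    obtain ⟨cw, hc0, hcz, hcs, hcc⟩ := combo_of_mem_simplexHull (d+1) (Nat.succ_pos d) τ y hy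
    obtain ⟨ew, he0, hez, hes, hec⟩ := combo_of_mem_simplexHull (d+1) (Nat.succ_pos d) S'' z hz
    obtain ⟨rw_, hr0, hrz, hrs, hrc⟩ := combo_of_mem_simplexHull d hd R (projLast y) hxR
    have hτS : ∀ i ∉ S, cw i = 0 := fun i hi => hcz i (fun h => hi (hτ h))
    have hRSz : ∀ i ∉ S, rw_ i = 0 := fun i hi => hrz i (fun h => hi (hRS h))
    have hRS''z : ∀ i ∉ S'', rw_ i = 0 := fun i hi => hrz i (fun h => hi (hRS'' h))
    -- moments of cw - rw_ over S vanish up to degree d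
    have hmom1 : ∀ k ≤ d, ∑ i ∈ S, (cw i - rw_ i) * (i:ℝ)^k = 0 := by
      intro k hk
      have hsplit : ∑ i ∈ S, (cw i - rw_ i) * (i:ℝ)^k
          = (∑ i ∈ S, cw i * (i:ℝ)^k) - ∑ i ∈ S, rw_ i * (i:ℝ)^k := by
        rw [← Finset.sum_sub_distrib]
        apply Finset.sum_congr rfl; intro i _; ring
      rw [hsplit, carrier_sum S τ hτ cw hcz, carrier_sum S R hRS rw_ hrz]
      rcases Nat.eq_zero_or_pos k with h0 | hkpos
      · subst h0
        simp only [pow_zero, mul_one]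
        rw [hcs, hrs]; ring
      · obtain ⟨m, rfl⟩ := Nat.exists_eq_succ_of_ne_zero (Nat.pos_iff_ne_zero.1 hkpos)
        have hmd : m < d := by omega
        have h1 : ∑ i ∈ τ, cw i * (i:ℝ)^(m+1) = y ⟨m, by omega⟩ := (hcc ⟨m, by omega⟩).symm
        have h2 : ∑ i ∈ R, rw_ i * (i:ℝ)^(m+1) = projLast y ⟨m, hmd⟩ := (hrc ⟨m, hmd⟩).symm
        have h3 : projLast y ⟨m, hmd⟩ = y ⟨m, by omega⟩ := rfl
        rw [h1, h2, h3]; ring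
    have hceq : ∀ j, cw j - rw_ j = 0 := by
      apply vand_zero d S (le_of_eq hcardS) _ ?_ hmom1
      intro i hi
      rw [hτS i hi, hRSz i hi]; ring
    -- same for ew - rw_ over S''
    have hmom2 : ∀ k ≤ d, ∑ i ∈ S'', (ew i - rw_ i) * (i:ℝ)^k = 0 := by
      intro k hk
      have hsplit : ∑ i ∈ S'', (ew i - rw_ i) * (i:ℝ)^k
          = (∑ i ∈ S'', ew i * (i:ℝ)^k) - ∑ i ∈ S'', rw_ i * (i:ℝ)^k := by
        rw [← Finset.sum_sub_distrib]
        apply Finset.sum_congr rfl; intro i _; ring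
      rw [hsplit, carrier_sum S'' S'' (subset_refl _) ew hez,
        carrier_sum S'' R hRS'' rw_ hrz]
      rcases Nat.eq_zero_or_pos k with h0 | hkpos
      · subst h0
        simp only [pow_zero, mul_one]
        rw [hes, hrs]; ring
      · obtain ⟨m, rfl⟩ := Nat.exists_eq_succ_of_ne_zero (Nat.pos_iff_ne_zero.1 hkpos)
        have hmd : m < d := by omega
        have h1 : ∑ i ∈ S'', ew i * (i:ℝ)^(m+1) = z ⟨m, by omega⟩ := (hec ⟨m, by omega⟩).symm
        have h2 : ∑ i ∈ R, rw_ i * (i:ℝ)^(m+1) = projLast y ⟨m, hmd⟩ := (hrc ⟨m, hmd⟩).symm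
        have h3 : projLast y ⟨m, hmd⟩ = z ⟨m, by omega⟩ := by rw [hpr]; rfl
        rw [h1, h2, h3]; ring
    have heeq : ∀ j, ew j - rw_ j = 0 := by
      apply vand_zero d S'' (le_of_eq hcardS'') _ ?_ hmom2
      intro i hi
      rw [hez i hi, hRS''z i hi]; ring
    -- conclude equality of last coordinates
    have hly : lastc y = ∑ i ∈ R, rw_ i * (i:ℝ)^(d+1) := by
      have h1 : lastc y = ∑ i ∈ τ, cw i * (i:ℝ)^(d+1) := by
        have := hcc (Fin.last d)
        simpa [lastc, Fin.last] using this
      rw [h1, ← carrier_sum S τ hτ cw hcz, ← carrier_sum S R hRS rw_ hrz]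
      apply Finset.sum_congr rfl; intro i _
      have := hceq i
      have : cw i = rw_ i := by linarith
      rw [this]
    have hlz : lastc z = ∑ i ∈ R, rw_ i * (i:ℝ)^(d+1) := by
      have h1 : lastc z = ∑ i ∈ S'', ew i * (i:ℝ)^(d+1) := by
        have := hec (Fin.last d)
        simpa [lastc, Fin.last] using this
      rw [h1, ← carrier_sum S'' R hRS'' rw_ hrz]
      apply Finset.sum_congr rfl; intro i _
      have := heeq i
      have : ew i = rw_ i := by linarith
      rw [this]
    rw [hly, hlz]

end Aux

/-- `T₁ ≤₂ T₂` iff the `⌈d/2⌉`-th submersion set of `T₁` is contained in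
that of `T₂` (an `i`-simplex has `i+1` vertices, and `⌈d/2⌉ = (d+1)/2` in `ℕ`). -/
theorem stmt_10 (n d : ℕ) (T₁ T₂ : Triangulation n d) :
    le₂ T₁ T₂ ↔
      ∀ σ : Finset ℕ, σ ⊆ Finset.Icc 1 n → σ.card = (d + 1) / 2 + 1 →
        Submerged σ T₁ → Submerged σ T₂ := by
  constructor
  · -- forward
    intro h σ hσsub _hσcard hsub1 S' hS' y hy z hz hpr
    have hx : projLast y ∈ simplexHull d σ := projLast_mem d σ y hy
    have hx2 : projLast y ∈ simplexHull d (Finset.Icc 1 n) := simplexHull_mono d hσsub hx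
    rw [← T₁.covers] at hx2
    obtain ⟨S, hS, hxS⟩ : ∃ S ∈ T₁.simps, projLast y ∈ simplexHull d S := by
      simpa using hx2
    obtain ⟨wpt, hwmem, hwproj⟩ := exists_lift d S (projLast y) hxS
    have h1 : lastc y ≤ lastc wpt := hsub1 S hS y hy wpt hwmem hwproj.symm
    have h2 : lastc wpt ≤ lastc z := h S hS S' hS' wpt hwmem z hz (by rw [hwproj, hpr])
    linarith
  · -- backward
    intro h S hS S' hS' y hy z hz hpr
    by_contra hlt
    push_neg at hlt
    obtain ⟨a, ha0, haz, has, hac⟩ := combo_of_mem_simplexHull (d+1) (Nat.succ_pos d) S y hy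
    obtain ⟨b, hb0, hbz, hbs, hbc⟩ := combo_of_mem_simplexHull (d+1) (Nat.succ_pos d) S' z hz
    set A := S ∪ S' with hA
    set v : ℕ → ℝ := fun i => a i - b i with hv
    have hSA : S ⊆ A := Finset.subset_union_left
    have hS'A : S' ⊆ A := Finset.subset_union_right
    have hvA : ∀ i ∉ A, v i = 0 := by
      intro i hi
      have h1 : i ∉ S := fun hx => hi (hSA hx)
      have h2 : i ∉ S' := fun hx => hi (hS'A hx)
      simp [hv, haz i h1, hbz i h2]
    have hsplitA : ∀ f : ℕ → ℝ, ∑ i ∈ A, v i * f i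
        = (∑ i ∈ S, a i * f i) - ∑ i ∈ S', b i * f i := by
      intro f
      rw [← carrier_sum A S hSA a haz f, ← carrier_sum A S' hS'A b hbz f,
        ← Finset.sum_sub_distrib]
      apply Finset.sum_congr rfl; intro i _; simp [hv]; ring
    have hm : ∀ k ≤ d, ∑ i ∈ A, v i * (i:ℝ)^k = 0 := by
      intro k hk
      rw [hsplitA]
      rcases Nat.eq_zero_or_pos k with h0 | hkpos
      · subst h0
        simp only [pow_zero, mul_one]
        rw [has, hbs]; ring
      · obtain ⟨m, rfl⟩ := Nat.exists_eq_succ_of_ne_zero (Nat.pos_iff_ne_zero.1 hkpos)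
        have hmd : m < d := by omega
        have h1 : ∑ i ∈ S, a i * (i:ℝ)^(m+1) = y ⟨m, by omega⟩ := (hac ⟨m, by omega⟩).symm
        have h2 : ∑ i ∈ S', b i * (i:ℝ)^(m+1) = z ⟨m, by omega⟩ := (hbc ⟨m, by omega⟩).symm
        have h3 : y ⟨m, by omega⟩ = z ⟨m, by omega⟩ := congrFun hpr ⟨m, hmd⟩
        rw [h1, h2, h3]; ring
    have hq : 0 < ∑ i ∈ A, v i * (i:ℝ)^(d+1) := by
      rw [hsplitA]
      have h1 : ∑ i ∈ S, a i * (i:ℝ)^(d+1) = lastc y := (hac (Fin.last d)).symm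
      have h2 : ∑ i ∈ S', b i * (i:ℝ)^(d+1) = lastc z := (hbc (Fin.last d)).symm
      rw [h1, h2]
      linarith
    obtain ⟨v', hconf, hcard', hm', hq'⟩ :=
      lemA d A (A.filter (fun i => v i ≠ 0)).card v le_rfl hvA hm hq
    set P := A.filter (fun i => 0 < v' i) with hP
    set N := A.filter (fun i => v' i < 0) with hN
    have hPcard : P.card ≤ (d+1)/2 + 1 := by
      have hvA' : ∀ i ∉ A, v' i = 0 := fun i hi => (hconf i).1 (hvA i hi)
      exact lemB d A v' hvA' hcard' hm' hq'
    have hPS : P ⊆ S := by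
      intro i hi
      have h1 : 0 < v' i := (Finset.mem_filter.1 hi).2
      have h2 : 0 < v i := by
        by_contra hcon
        push_neg at hcon
        have := (hconf i).2.2 hcon
        linarith
      have h3 : 0 < a i := by
        have := hb0 i
        simp only [hv] at h2
        linarith
      by_contra hiS
      rw [haz i hiS] at h3
      linarith
    have hNS' : N ⊆ S' := by
      intro i hi
      have h1 : v' i < 0 := (Finset.mem_filter.1 hi).2
      have h2 : v i < 0 := by
        by_contra hcon
        push_neg at hcon
        have := (hconf i).2.1 hcon
        linarith
      have h3 : 0 < b i := by
        have := ha0 i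
        simp only [hv] at h2
        linarith
      by_contra hiS'
      rw [hbz i hiS'] at h3
      linarith
    have hdisjPN : Disjoint P N := by
      rw [Finset.disjoint_left]
      intro i hiP hiN
      have h1 := (Finset.mem_filter.1 hiP).2
      have h2 := (Finset.mem_filter.1 hiN).2
      linarith
    have hAsum : ∀ f : ℕ → ℝ, ∑ i ∈ A, v' i * f i
        = (∑ i ∈ P, v' i * f i) + ∑ i ∈ N, v' i * f i := by
      intro f
      rw [← Finset.sum_union hdisjPN]
      symm
      apply Finset.sum_subset (Finset.union_subset (Finset.filter_subset _ _)
        (Finset.filter_subset _ _))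
      intro x hx hxn
      have h1 : ¬ 0 < v' x := fun hc => hxn (Finset.mem_union_left _ (Finset.mem_filter.2 ⟨hx, hc⟩))
      have h2 : ¬ v' x < 0 := fun hc => hxn (Finset.mem_union_right _ (Finset.mem_filter.2 ⟨hx, hc⟩))
      have : v' x = 0 := by linarith [lt_trichotomy (v' x) 0]
      rw [this, zero_mul]
    set m := ∑ i ∈ P, v' i with hmdef
    have hPne : P.Nonempty := by
      have : ∃ i ∈ A, (0:ℝ) < v' i * (i:ℝ)^(d+1) := by
        by_contra hcon
        push_neg at hcon
        have : ∑ i ∈ A, v' i * (i:ℝ)^(d+1) ≤ 0 := Finset.sum_nonpos hcon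
        linarith
      obtain ⟨i, hi, hpos⟩ := this
      refine ⟨i, Finset.mem_filter.2 ⟨hi, ?_⟩⟩
      by_contra hcon
      push_neg at hcon
      nlinarith [pow_nonneg (Nat.cast_nonneg i : (0:ℝ) ≤ i) (d+1)]
    have hmpos : 0 < m := by
      rw [hmdef]
      apply Finset.sum_pos
      · intro i hi; exact (Finset.mem_filter.1 hi).2
      · exact hPne
    have hm0 : m ≠ 0 := ne_of_gt hmpos
    have hNsum : ∑ i ∈ N, v' i = -m := by
      have := hAsum (fun _ => 1)
      simp only [mul_one] at this
      have h0 := hm' 0 (Nat.zero_le d)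
      simp only [pow_zero, mul_one] at h0
      rw [this] at h0
      linarith
    -- extend P to τ
    have hcardS : S.card = d + 1 := T₁.card_eq S hS
    obtain ⟨τ, hPτ, hτS, hτcard⟩ := Finset.exists_subsuperset_card_eq hPS hPcard
      (by rw [hcardS]; omega)
    have hsubm : Submerged τ T₂ :=
      h τ (hτS.trans (T₁.subset_vertices S hS)) hτcard (face_submerged T₁ hS hτS)
    set a' : ℕ → ℝ := fun i => if 0 < v' i then v' i / m else 0 with ha'
    set b' : ℕ → ℝ := fun i => if v' i < 0 then -v' i / m else 0 with hb'
    have hτa' : ∀ f : ℕ → ℝ, ∑ i ∈ τ, a' i * f i = ∑ i ∈ P, (v' i / m) * f i := by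
      intro f
      rw [← Finset.sum_subset hPτ (by
        intro x hx hxP
        have h1 : ¬ 0 < v' x := by
          intro hc
          exact hxP (Finset.mem_filter.2 ⟨hSA (hτS hx), hc⟩)
        simp [ha', h1])]
      apply Finset.sum_congr rfl; intro i hi
      simp [ha', (Finset.mem_filter.1 hi).2]
    have hS'b' : ∀ f : ℕ → ℝ, ∑ i ∈ S', b' i * f i = ∑ i ∈ N, (-v' i / m) * f i := by
      intro f
      rw [← Finset.sum_subset hNS' (by
        intro x hx hxN
        have h1 : ¬ v' x < 0 := by
          intro hc
          exact hxN (Finset.mem_filter.2 ⟨hS'A hx, hc⟩)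
        simp [hb', h1])]
      apply Finset.sum_congr rfl; intro i hi
      simp [hb', (Finset.mem_filter.1 hi).2]
    have hdiff : ∀ f : ℕ → ℝ, (∑ i ∈ τ, a' i * f i) - (∑ i ∈ S', b' i * f i)
        = (∑ i ∈ A, v' i * f i) / m := by
      intro f
      rw [hτa', hS'b', hAsum]
      have h1 : ∑ i ∈ P, v' i / m * f i = (∑ i ∈ P, v' i * f i) / m := by
        rw [Finset.sum_div]
        apply Finset.sum_congr rfl; intro i _; ring
      have h2 : ∑ i ∈ N, -v' i / m * f i = -((∑ i ∈ N, v' i * f i) / m) := by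
        rw [Finset.sum_div, ← Finset.sum_neg_distrib]
        apply Finset.sum_congr rfl; intro i _; ring
      rw [h1, h2]
      ring
    set y' : Fin (d+1) → ℝ := fun k => ∑ i ∈ τ, a' i * (i:ℝ)^(k.1+1) with hy'
    set z' : Fin (d+1) → ℝ := fun k => ∑ i ∈ S', b' i * (i:ℝ)^(k.1+1) with hz'
    have hy'mem : y' ∈ simplexHull (d+1) τ := by
      apply mem_simplexHull_of_combo (d+1) τ a'
      · intro i
        rw [ha']
        by_cases hc : 0 < v' i
        · simp only [if_pos hc]
          positivity
        · simp [hc]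
      · have := hτa' (fun _ => 1)
        simp only [mul_one] at this
        rw [this, ← Finset.sum_div]
        rw [← hmdef, div_self hm0]
      · intro k; rfl
    have hz'mem : z' ∈ simplexHull (d+1) S' := by
      apply mem_simplexHull_of_combo (d+1) S' b'
      · intro i
        rw [hb']
        by_cases hc : v' i < 0
        · simp only [if_pos hc]
          have : 0 < -v' i := by linarith
          positivity
        · simp [hc]
      · have := hS'b' (fun _ => 1)
        simp only [mul_one] at this
        rw [this, ← Finset.sum_div]
        have : ∑ i ∈ N, -v' i = m := by
          rw [Finset.sum_neg_distrib, hNsum]; ring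
        rw [this, div_self hm0]
      · intro k; rfl
    have hproj' : projLast y' = projLast z' := by
      funext k
      have hkd : k.1 + 1 ≤ d := by omega
      have := hdiff (fun i => (i:ℝ)^(k.1+1))
      rw [hm' (k.1+1) hkd] at this
      simp only [zero_div] at this
      have heq : (∑ i ∈ τ, a' i * (i:ℝ)^(k.1+1)) = ∑ i ∈ S', b' i * (i:ℝ)^(k.1+1) := by
        linarith
      show y' k.castSucc = z' k.castSucc
      rw [hy', hz']
      exact heq
    have hle := hsubm S' hS' y' hy'mem z' hz'mem hproj'
    have hgt : lastc z' < lastc y' := by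
      have := hdiff (fun i => (i:ℝ)^(d+1))
      have hpos : 0 < (∑ i ∈ A, v' i * (i:ℝ)^(d+1)) / m := div_pos hq' hmpos
      have h1 : lastc y' = ∑ i ∈ τ, a' i * (i:ℝ)^(d+1) := rfl
      have h2 : lastc z' = ∑ i ∈ S', b' i * (i:ℝ)^(d+1) := rfl
      rw [h1, h2]
      linarith
    linarith
end

section
/- The map f from triangulations of C(n,d) to triangulations of C(n-1,d) given by f(T) = del_T(n) ∪ (del_{lk_T(n)}(n-1) * {n-1}) is order-preserving from the second higher Stasheff–Tamari order S₂(n,d) to S₂(n-1,d). -/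
open Finset

/-! ### Auxiliary machinery for stmt_11 -/

section Aux
open Polynomial

/-- `w` is a (convex-combination) representation of `x` with labels in `S`. -/
def isRep (d : ℕ) (S : Finset ℕ) (w : ℕ → ℝ) (x : Fin d → ℝ) : Prop :=
  (∀ j, 0 ≤ w j) ∧ (∀ j, j ∉ S → w j = 0) ∧ (∑ j ∈ S, w j = 1) ∧
    (∀ k : Fin d, ∑ j ∈ S, w j * (j : ℝ) ^ (k.1 + 1) = x k)

lemma isRep_of_subset {d : ℕ} {S S' : Finset ℕ} {w : ℕ → ℝ} {x : Fin d → ℝ}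
    (h : isRep d S w x) (hss : S ⊆ S') : isRep d S' w x := by
  obtain ⟨h0, hs, h1, hc⟩ := h
  have hsum : ∀ (f : ℕ → ℝ), ∑ j ∈ S', w j * f j = ∑ j ∈ S, w j * f j := by
    intro f
    refine (Finset.sum_subset hss ?_).symm
    intro j _ hj
    rw [hs j hj, zero_mul]
  refine ⟨h0, fun j hj => hs j (fun hjS => hj (hss hjS)), ?_, ?_⟩
  · have := hsum (fun _ => 1)
    simpa using this.trans (by simpa using h1)
  · intro k
    rw [hsum (fun j => (j:ℝ)^(k.1+1))]
    exact hc k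

/-- From a representation, membership in the simplex hull. -/
lemma mem_hull_of_rep {d : ℕ} {S : Finset ℕ} {w : ℕ → ℝ} {x : Fin d → ℝ}
    (h : isRep d S w x) : x ∈ simplexHull d S := by
  obtain ⟨h0, hs, h1, hc⟩ := h
  have hx : x = S.centerMass w (mompt d) := by
    rw [Finset.centerMass_eq_of_sum_1 _ _ h1]
    funext k
    simp only [Finset.sum_apply, Pi.smul_apply, smul_eq_mul, mompt]
    exact (hc k).symm
  rw [hx, simplexHull]
  exact Finset.centerMass_mem_convexHull S (fun i _ => h0 i) (by rw [h1]; norm_num)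
    (fun i hi => Set.mem_image_of_mem _ (by exact_mod_cast hi))

/-- From membership in the simplex hull, a representation exists. -/
lemma rep_of_mem_hull {d : ℕ} {S : Finset ℕ} {x : Fin d → ℝ}
    (h : x ∈ simplexHull d S) : ∃ w, isRep d S w x := by
  classical
  rw [simplexHull] at h
  have himg : mompt d '' ↑S = ↑(S.image (mompt d)) := by
    simp [Finset.coe_image]
  rw [himg, Finset.mem_convexHull] at h
  obtain ⟨W, hW0, hW1, hWx⟩ := h
  -- pick a representative label for each point
  set pick : (Fin d → ℝ) → ℕ := fun p =>
    if hp : ∃ j ∈ S, mompt d j = p then hp.choose else 0 with hpick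
  have hpick_mem : ∀ p ∈ S.image (mompt d), pick p ∈ S ∧ mompt d (pick p) = p := by
    intro p hp
    rw [Finset.mem_image] at hp
    obtain ⟨j, hj, hjp⟩ := hp
    have hex : ∃ j ∈ S, mompt d j = p := ⟨j, hj, hjp⟩
    simp only [hpick, dif_pos hex]
    exact ⟨hex.choose_spec.1, hex.choose_spec.2⟩
  refine ⟨fun j => ∑ p ∈ (S.image (mompt d)).filter (fun p => pick p = j), W p, ?_, ?_, ?_, ?_⟩
  · intro j
    exact Finset.sum_nonneg fun p hp => hW0 p (Finset.mem_filter.mp hp).1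
  · intro j hj
    refine Finset.sum_eq_zero ?_
    intro p hp
    rw [Finset.mem_filter] at hp
    exact absurd (hp.2 ▸ (hpick_mem p hp.1).1) hj
  · rw [Finset.sum_fiberwise_of_maps_to (fun p hp => (hpick_mem p hp).1)]
    exact hW1
  · intro k
    have : ∀ j ∈ S, (∑ p ∈ (S.image (mompt d)).filter (fun p => pick p = j), W p)
        * (j:ℝ)^(k.1+1)
        = ∑ p ∈ (S.image (mompt d)).filter (fun p => pick p = j), W p * p k := by
      intro j hj
      rw [Finset.sum_mul]
      refine Finset.sum_congr rfl fun p hp => ?_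
      rw [Finset.mem_filter] at hp
      have := (hpick_mem p hp.1).2
      rw [hp.2] at this
      rw [← this]
      rfl
    rw [Finset.sum_congr rfl this,
      Finset.sum_fiberwise_of_maps_to (fun p hp => (hpick_mem p hp).1)]
    have hxk : x k = ∑ p ∈ S.image (mompt d), W p * p k := by
      rw [← hWx, Finset.centerMass_eq_of_sum_1 _ _ hW1]
      simp [Finset.sum_apply]
    rw [hxk]

end Aux

section AuxB
open Polynomial

/-- The polynomial `X^(d+1) - ∏_{j∈S} (X - j)`; for `|S| = d+1` it has degree `≤ d` and
interpolates `t ↦ t^(d+1)` on `S`. -/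
noncomputable def eP (d : ℕ) (S : Finset ℕ) : ℝ[X] :=
  X ^ (d+1) - ∏ j ∈ S, (X - C (j:ℝ))

/-- The affine functional on `ℝ^d` whose restriction to the simplex on `S` is the section
determined by `t ↦ t^(d+1)` at the vertices. -/
noncomputable def EE (d : ℕ) (S : Finset ℕ) (x : Fin d → ℝ) : ℝ :=
  (eP d S).coeff 0 + ∑ k : Fin d, (eP d S).coeff (k.1+1) * x k

lemma eP_natDegree_le {d : ℕ} {S : Finset ℕ} (hcard : S.card = d + 1) :
    (eP d S).natDegree ≤ d := by
  have hmon : (∏ j ∈ S, (X - C (j:ℝ))).Monic :=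
    monic_prod_of_monic _ _ (fun j _ => monic_X_sub_C _)
  have hdeg : (∏ j ∈ S, (X - C (j:ℝ))).natDegree = d + 1 := by
    rw [natDegree_prod_of_monic _ _ (fun j _ => monic_X_sub_C _)]
    simp only [natDegree_X_sub_C]
    simp [hcard]
  rw [natDegree_le_iff_coeff_eq_zero]
  intro r hr
  rw [eP, coeff_sub, coeff_X_pow]
  rcases eq_or_lt_of_le (Nat.succ_le_of_lt hr) with he | hl
  · have : r = d + 1 := by omega
    subst this
    rw [if_pos rfl]
    have := hmon.coeff_natDegree
    rw [hdeg] at this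
    rw [this]; ring
  · rw [if_neg (by omega), coeff_eq_zero_of_natDegree_lt (by omega)]
    ring

lemma eP_eval_mem {d : ℕ} {S : Finset ℕ} {j : ℕ} (hj : j ∈ S) :
    (eP d S).eval (j:ℝ) = (j:ℝ)^(d+1) := by
  rw [eP, eval_sub, eval_pow, eval_X, eval_prod]
  rw [Finset.prod_eq_zero hj (by simp)]
  ring

/-- Key identity: on a representation with labels in `S`, the affine functional `EE`
computes the lift value `∑ w j * j^(d+1)`. -/
lemma EE_rep {d : ℕ} {S S₀ : Finset ℕ} {w : ℕ → ℝ} {x : Fin d → ℝ}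
    (hcard : S.card = d + 1) (hsub : S₀ ⊆ S) (h : isRep d S₀ w x) :
    EE d S x = ∑ j ∈ S₀, w j * (j:ℝ)^(d+1) := by
  obtain ⟨h0, hs, h1, hc⟩ := isRep_of_subset h hsub
  have hdeg : (eP d S).natDegree < d + 1 := Nat.lt_succ_of_le (eP_natDegree_le hcard)
  have heval : ∀ j : ℕ, (eP d S).eval (j:ℝ)
      = ∑ r ∈ Finset.range (d+1), (eP d S).coeff r * (j:ℝ)^r := fun j =>
    eval_eq_sum_range' hdeg _
  have key : ∑ j ∈ S, w j * (eP d S).eval (j:ℝ) = EE d S x := by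
    calc ∑ j ∈ S, w j * (eP d S).eval (j:ℝ)
        = ∑ j ∈ S, ∑ r ∈ Finset.range (d+1), w j * ((eP d S).coeff r * (j:ℝ)^r) := by
          refine Finset.sum_congr rfl fun j _ => ?_
          rw [heval j, Finset.mul_sum]
      _ = ∑ r ∈ Finset.range (d+1), ∑ j ∈ S, w j * ((eP d S).coeff r * (j:ℝ)^r) :=
          Finset.sum_comm
      _ = ∑ r ∈ Finset.range (d+1), (eP d S).coeff r * ∑ j ∈ S, w j * (j:ℝ)^r := by
          refine Finset.sum_congr rfl fun r _ => ?_
          rw [Finset.mul_sum]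
          refine Finset.sum_congr rfl fun j _ => by ring
      _ = EE d S x := by
          rw [Finset.sum_range_succ']
          have h00 : (eP d S).coeff 0 * ∑ j ∈ S, w j * (j:ℝ)^0 = (eP d S).coeff 0 := by
            simp [h1]
          rw [h00, EE, add_comm]
          congr 1
          rw [← Fin.sum_univ_eq_sum_range (fun i => (eP d S).coeff (i+1)
            * ∑ j ∈ S, w j * (j:ℝ)^(i+1)) d]
          refine Finset.sum_congr rfl fun k _ => ?_
          rw [hc k]
  have hsupp : ∑ j ∈ S, w j * (eP d S).eval (j:ℝ)
      = ∑ j ∈ S₀, w j * (eP d S).eval (j:ℝ) := by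
    refine (Finset.sum_subset hsub ?_).symm
    intro j _ hj
    rw [h.2.1 j hj, zero_mul]
  rw [← key, hsupp]
  refine Finset.sum_congr rfl fun j hj => ?_
  rw [eP_eval_mem (hsub hj)]

end AuxB

section AuxC

/-- The lift of a representation to `ℝ^(d+1)`. -/
lemma lift_rep {d : ℕ} {S : Finset ℕ} {w : ℕ → ℝ} {x : Fin d → ℝ}
    (hrep : isRep d S w x) :
    isRep (d+1) S w (fun k => ∑ j ∈ S, w j * (j:ℝ)^(k.1+1)) :=
  ⟨hrep.1, hrep.2.1, hrep.2.2.1, fun _ => rfl⟩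

lemma weaklyLower_pointwise {d : ℕ} {S S' : Finset ℕ} (hw : WeaklyLower d S S')
    {w w' : ℕ → ℝ} {x : Fin d → ℝ} (hrep : isRep d S w x) (hrep' : isRep d S' w' x) :
    ∑ j ∈ S, w j * (j:ℝ)^(d+1) ≤ ∑ j ∈ S', w' j * (j:ℝ)^(d+1) := by
  set y : Fin (d+1) → ℝ := fun k => ∑ j ∈ S, w j * (j:ℝ)^(k.1+1) with hy
  set z : Fin (d+1) → ℝ := fun k => ∑ j ∈ S', w' j * (j:ℝ)^(k.1+1) with hz
  have hproj : projLast y = projLast z := by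
    funext k
    show y k.castSucc = z k.castSucc
    rw [hy, hz]
    simp only [Fin.coe_castSucc]
    rw [hrep.2.2.2 k, hrep'.2.2.2 k]
  have := hw y (mem_hull_of_rep (lift_rep hrep)) z (mem_hull_of_rep (lift_rep hrep')) hproj
  simpa [lastc, hy, hz] using this

lemma section_welldef {d : ℕ} {V : Finset ℕ} (TT : TriangulationOn d V) {S₁ S₂ : Finset ℕ}
    (h1 : S₁ ∈ TT.simps) (h2 : S₂ ∈ TT.simps) {x : Fin d → ℝ}
    (hx1 : x ∈ simplexHull d S₁) (hx2 : x ∈ simplexHull d S₂) :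
    EE d S₁ x = EE d S₂ x := by
  obtain ⟨R, hR1, hR2, hRint⟩ := TT.pairwise_admissible S₁ h1 S₂ h2
  have hxR : x ∈ simplexHull d R := by rw [← hRint]; exact ⟨hx1, hx2⟩
  obtain ⟨wR, hwR⟩ := rep_of_mem_hull hxR
  rw [EE_rep (TT.card_eq S₁ h1) hR1 hwR, EE_rep (TT.card_eq S₂ h2) hR2 hwR]

lemma exists_cover {d : ℕ} {V : Finset ℕ} (TT : TriangulationOn d V) {x : Fin d → ℝ}
    (hx : x ∈ simplexHull d V) : ∃ S ∈ TT.simps, x ∈ simplexHull d S := by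
  rw [← TT.covers] at hx
  simpa using hx

lemma hull_mono {d : ℕ} {S S' : Finset ℕ} (hss : S ⊆ S') :
    simplexHull d S ⊆ simplexHull d S' :=
  convexHull_mono (Set.image_mono (by exact_mod_cast hss))

end AuxC

section AuxD
open Polynomial

/-- Direction of the slide `n-1 ↦ n` on the moment curve. -/
def vdir (d mm nn : ℕ) : Fin d → ℝ := fun k => (nn:ℝ)^(k.1+1) - (mm:ℝ)^(k.1+1)

/-- Height gain of the slide in the last (lifted) coordinate. -/
def Dlt (d mm nn : ℕ) : ℝ := (nn:ℝ)^(d+1) - (mm:ℝ)^(d+1)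

/-- Points along the slide direction. -/
def ptv {d : ℕ} (x : Fin d → ℝ) (v : Fin d → ℝ) (s : ℝ) : Fin d → ℝ := fun k => x k + s * v k

lemma ptv_zero {d : ℕ} (x v : Fin d → ℝ) : ptv x v 0 = x := by
  funext k; simp [ptv]

lemma EE_ptv {d : ℕ} (S : Finset ℕ) (x v : Fin d → ℝ) (s : ℝ) :
    EE d S (ptv x v s) = EE d S x + s * (∑ k : Fin d, (eP d S).coeff (k.1+1) * v k) := by
  simp only [EE, ptv, mul_add, Finset.sum_add_distrib, Finset.mul_sum]
  rw [add_assoc]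
  congr 1
  congr 1
  exact Finset.sum_congr rfl fun k _ => by ring

lemma slope_le {d mm nn : ℕ} {S : Finset ℕ} (hm : mm + 1 = nn) (hS : S ⊆ Finset.Icc 1 nn)
    (hcard : S.card = d + 1) :
    ∑ k : Fin d, (eP d S).coeff (k.1+1) * vdir d mm nn k ≤ Dlt d mm nn := by
  have hdeg : (eP d S).natDegree < d + 1 := Nat.lt_succ_of_le (eP_natDegree_le hcard)
  have hsum : ∑ k : Fin d, (eP d S).coeff (k.1+1) * vdir d mm nn k
      = (eP d S).eval (nn:ℝ) - (eP d S).eval (mm:ℝ) := by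
    rw [eval_eq_sum_range' hdeg, eval_eq_sum_range' hdeg, ← Finset.sum_sub_distrib,
      Finset.sum_range_succ']
    have h0 : (eP d S).coeff 0 * (nn:ℝ)^0 - (eP d S).coeff 0 * (mm:ℝ)^0 = 0 := by ring
    rw [h0, add_zero, ← Fin.sum_univ_eq_sum_range
      (fun i => (eP d S).coeff (i+1) * (nn:ℝ)^(i+1) - (eP d S).coeff (i+1) * (mm:ℝ)^(i+1)) d]
    refine Finset.sum_congr rfl fun k _ => by rw [vdir]; ring
  rw [hsum]
  have hP : (∏ j ∈ S, (X - C (j:ℝ))).eval (mm:ℝ) ≤ (∏ j ∈ S, (X - C (j:ℝ))).eval (nn:ℝ) := by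
    rw [eval_prod, eval_prod]
    simp only [eval_sub, eval_X, eval_C]
    have hle : ∀ j ∈ S, (j:ℝ) ≤ (nn:ℝ) := by
      intro j hj
      exact_mod_cast Nat.cast_le.mpr (Finset.mem_Icc.mp (hS hj)).2
    by_cases hnn : nn ∈ S
    · have hz : ∏ j ∈ S, ((nn:ℝ) - (j:ℝ)) = 0 := Finset.prod_eq_zero hnn (by simp)
      rw [hz]
      have hfac : ∀ j ∈ S.erase nn, (0:ℝ) ≤ (mm:ℝ) - (j:ℝ) := by
        intro j hj
        have hj1 := Finset.mem_erase.mp hj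
        have : j ≤ mm := by
          have := (Finset.mem_Icc.mp (hS hj1.2)).2
          omega
        have : (j:ℝ) ≤ (mm:ℝ) := by exact_mod_cast this
        linarith
      have hsplit : ∏ j ∈ S, ((mm:ℝ) - (j:ℝ))
          = ((mm:ℝ) - (nn:ℝ)) * ∏ j ∈ S.erase nn, ((mm:ℝ) - (j:ℝ)) :=
        (Finset.mul_prod_erase S (fun j => (mm:ℝ) - (j:ℝ)) hnn).symm
      rw [hsplit]
      have h1 : (mm:ℝ) - (nn:ℝ) ≤ 0 := by
        have : (mm:ℝ) + 1 = (nn:ℝ) := by exact_mod_cast hm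
        linarith
      exact mul_nonpos_of_nonpos_of_nonneg h1 (Finset.prod_nonneg hfac)
    · refine Finset.prod_le_prod ?_ ?_
      · intro j hj
        have hjm : j ≤ mm := by
          have h2 := (Finset.mem_Icc.mp (hS hj)).2
          have : j ≠ nn := fun hh => hnn (hh ▸ hj)
          omega
        have : (j:ℝ) ≤ (mm:ℝ) := by exact_mod_cast hjm
        linarith
      · intro j hj
        have : (mm:ℝ) ≤ (nn:ℝ) := by
          have : (mm:ℝ) + 1 = (nn:ℝ) := by exact_mod_cast hm
          linarith
        linarith
  have hevals : ∀ t : ℝ, (eP d S).eval t = t^(d+1) - (∏ j ∈ S, (X - C (j:ℝ))).eval t := by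
    intro t
    rw [eP, eval_sub, eval_pow, eval_X]
  rw [hevals, hevals, Dlt]
  linarith

end AuxD

section AuxD2

/-- The value of the characteristic section decreases (relative to the slide) along the
slide direction: walking from parameter `lam` down to `0`. -/
lemma walk {d n mm : ℕ} (T' : TriangulationOn d (Finset.Icc 1 n)) (hm : mm + 1 = n)
    (x : Fin d → ℝ) {lam : ℝ} (hlam : 0 ≤ lam)
    (hseg : ∀ s, 0 ≤ s → s ≤ lam → ptv x (vdir d mm n) s ∈ simplexHull d (Finset.Icc 1 n))
    {Sa : Finset ℕ} (hSa : Sa ∈ T'.simps) (ha : ptv x (vdir d mm n) lam ∈ simplexHull d Sa)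
    {Sb : Finset ℕ} (hSb : Sb ∈ T'.simps) (hb : x ∈ simplexHull d Sb) :
    EE d Sa (ptv x (vdir d mm n) lam) - lam * Dlt d mm n ≤ EE d Sb x := by
  classical
  set v := vdir d mm n with hv
  set Δ := Dlt d mm n with hΔ
  set p : ℝ → (Fin d → ℝ) := fun s => ptv x v s with hp
  set A := EE d Sa (p lam) - lam * Δ with hA
  -- closedness of hulls
  have hclosed : ∀ S : Finset ℕ, IsClosed (simplexHull d S) := by
    intro S
    exact (Set.Finite.isCompact_convexHull ℝ ((S.finite_toSet).image _)).isClosed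
  -- the per-piece decrease
  have hpiece : ∀ (s t : ℝ), s ≤ t → ∀ C ∈ T'.simps, p s ∈ simplexHull d C →
      p t ∈ simplexHull d C → EE d C (p t) - t * Δ ≤ EE d C (p s) - s * Δ := by
    intro s t hst C hC _ _
    have hsl := slope_le (d := d) hm (T'.subset_vertices C hC) (T'.card_eq C hC)
    have h1 : EE d C (p t) = EE d C x + t * (∑ k : Fin d, (eP d C).coeff (k.1+1) * v k) :=
      EE_ptv C x v t
    have h2 : EE d C (p s) = EE d C x + s * (∑ k : Fin d, (eP d C).coeff (k.1+1) * v k) :=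
      EE_ptv C x v s
    nlinarith [hsl, hst]
  -- the distance control along the slide
  obtain ⟨M, hM0, hMb⟩ : ∃ M : ℝ, 0 < M ∧ ∀ k : Fin d, |v k| ≤ M := by
    refine ⟨(∑ k : Fin d, |v k|) + 1, by positivity, fun k => ?_⟩
    have : |v k| ≤ ∑ k : Fin d, |v k| :=
      Finset.single_le_sum (f := fun k => |v k|) (fun i _ => abs_nonneg _) (Finset.mem_univ k)
    linarith
  have hdist : ∀ s t : ℝ, dist (p s) (p t) ≤ |s - t| * M := by
    intro s t
    refine (dist_pi_le_iff (by positivity)).mpr fun k => ?_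
    rw [Real.dist_eq]
    have : p s k - p t k = (s - t) * v k := by simp [hp, ptv]; ring
    rw [this, abs_mul]
    have := hMb k
    have h0 := abs_nonneg (s - t)
    nlinarith
  --51the set of good parameters
  set K : Set ℝ := {s | 0 ≤ s ∧ s ≤ lam ∧ ∀ C ∈ T'.simps, p s ∈ simplexHull d C →
    A ≤ EE d C (p s) - s * Δ} with hK
  have hlamK : lam ∈ K := by
    refine ⟨hlam, le_refl _, fun C hC hmem => ?_⟩
    rw [hA, section_welldef T' hSa hC ha hmem]
  have hKne : K.Nonempty := ⟨lam, hlamK⟩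
  have hKbdd : BddBelow K := ⟨0, fun s hs => hs.1⟩
  set u := sInf K with hu
  have hu0 : 0 ≤ u := le_csInf hKne fun s hs => hs.1
  have hulam : u ≤ lam := csInf_le hKbdd hlamK
  -- a covering simplex exists for each parameter in range
  have hcov : ∀ s : ℝ, 0 ≤ s → s ≤ lam → ∃ C ∈ T'.simps, p s ∈ simplexHull d C := by
    intro s h0 h1
    exact exists_cover T' (hseg s h0 h1)
  -- approach from a side: find a single simplex capturing a sequence approaching u
  have happrox : ∀ (q : ℕ → ℝ), (∀ i, 0 ≤ q i ∧ q i ≤ lam) →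
      (∀ i : ℕ, |q i - u| ≤ 1 / (i + 1)) →
      ∃ C ∈ T'.simps, p u ∈ simplexHull d C ∧ ∀ N : ℕ, ∃ i ≥ N, p (q i) ∈ simplexHull d C := by
    intro q hq hq2
    have hch : ∀ i : ℕ, ∃ C ∈ T'.simps, p (q i) ∈ simplexHull d C := fun i =>
      hcov (q i) (hq i).1 (hq i).2
    choose ch hch1 hch2 using hch
    have : ∃ C : {A // A ∈ T'.simps}, (Set.Infinite ((fun i => (⟨ch i, hch1 i⟩ :
        {A // A ∈ T'.simps})) ⁻¹' {C})) := by
      obtain ⟨C, hC⟩ := Finite.exists_infinite_fiber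
        (fun i => (⟨ch i, hch1 i⟩ : {A // A ∈ T'.simps}))
      exact ⟨C, Set.infinite_coe_iff.mp hC⟩
    obtain ⟨⟨C, hCmem⟩, hCinf⟩ := this
    have hfib : ∀ N : ℕ, ∃ i ≥ N, ch i = C := by
      intro N
      obtain ⟨i, hi1, hi2⟩ := hCinf.exists_gt N
      refine ⟨i, le_of_lt hi2, ?_⟩
      have : (⟨ch i, hch1 i⟩ : {A // A ∈ T'.simps}) = ⟨C, hCmem⟩ := hi1
      exact congrArg Subtype.val this
    refine ⟨C, hCmem, ?_, ?_⟩
    · -- closure argument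
      have : p u ∈ closure (simplexHull d C) := by
        rw [Metric.mem_closure_iff]
        intro ε hε
        obtain ⟨N, hN⟩ := exists_nat_gt (M / ε)
        obtain ⟨i, hiN, hiC⟩ := hfib N
        refine ⟨p (q i), by rw [← hiC]; exact hch2 i, ?_⟩
        have h1 : dist (p u) (p (q i)) ≤ |u - q i| * M := hdist u (q i)
        have h2 : |u - q i| ≤ 1 / (i + 1) := by rw [abs_sub_comm]; exact hq2 i
        have h3 : (1 : ℝ) / (i + 1) ≤ 1 / (N + 1) := by
          apply one_div_le_one_div_of_le
          · positivity
          · have : (N : ℝ) ≤ i := Nat.cast_le.mpr hiN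
            linarith
        have h4 : M / ε < N + 1 := by
          have : (N:ℝ) < N + 1 := by linarith
          linarith
        have h5 : (1:ℝ) / (N+1) * M < ε := by
          have hh : M < (N + 1) * ε := by
            have := mul_lt_mul_of_pos_right h4 hε
            rw [div_mul_cancel₀ _ (ne_of_gt hε)] at this
            exact this
          rw [div_mul_eq_mul_div, one_mul, div_lt_iff₀ (by positivity)]
          linarith [mul_lt_mul_of_pos_right hh (show (0:ℝ) < 1 from one_pos)]
        calc dist (p u) (p (q i)) ≤ |u - q i| * M := h1
          _ ≤ 1 / (i+1) * M := by
              apply mul_le_mul_of_nonneg_right h2 (le_of_lt hM0)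
          _ ≤ 1 / (N+1) * M := by
              apply mul_le_mul_of_nonneg_right h3 (le_of_lt hM0)
          _ < ε := h5
      rwa [(hclosed _).closure_eq] at this
    · intro N
      obtain ⟨i, hiN, hiC⟩ := hfib N
      exact ⟨i, hiN, by rw [← hiC]; exact hch2 i⟩
  -- Step 1: u ∈ K
  have huK : u ∈ K := by
    refine ⟨hu0, hulam, fun S'' hS'' hmem => ?_⟩
    -- sequence approaching u from above within K
    have hseq : ∀ i : ℕ, ∃ s, s ∈ K ∧ s < u + 1 / (i+1) := by
      intro i
      have : u < u + 1 / (i+1) := by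
        have : (0:ℝ) < 1 / (i+1) := by positivity
        linarith
      exact (csInf_lt_iff hKbdd hKne).mp this
    choose q hqK hqlt using hseq
    have hq1 : ∀ i, 0 ≤ q i ∧ q i ≤ lam := fun i => ⟨(hqK i).1, (hqK i).2.1⟩
    have hq2 : ∀ i : ℕ, |q i - u| ≤ 1 / (i+1) := by
      intro i
      have hge : u ≤ q i := csInf_le hKbdd (hqK i)
      rw [abs_of_nonneg (by linarith)]
      have := hqlt i
      linarith
    obtain ⟨C, hCmem, hCu, hCfib⟩ := happrox q hq1 hq2
    obtain ⟨i, _, hCi⟩ := hCfib 0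
    have hKi := (hqK i).2.2 C hCmem hCi
    have hstep := hpiece u (q i) (csInf_le hKbdd (hqK i)) C hCmem hCu hCi
    have := section_welldef T' hCmem hS'' hCu hmem
    linarith [hKi, hstep, this.ge, this.le]
  -- Step 2: u = 0
  have hu_eq : u = 0 := by
    by_contra hne
    have hupos : 0 < u := lt_of_le_of_ne hu0 (Ne.symm hne)
    set q : ℕ → ℝ := fun i => u - min u (1 / (i+1)) with hq
    have hq1 : ∀ i, 0 ≤ q i ∧ q i ≤ lam := by
      intro i
      constructor
      · simp only [hq]
        have : min u (1/(i+1)) ≤ u := min_le_left _ _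
        linarith
      · simp only [hq]
        have h1 : (0:ℝ) ≤ min u (1/(i+1)) := le_min (le_of_lt hupos) (by positivity)
        linarith
    have hq2 : ∀ i : ℕ, |q i - u| ≤ 1 / (i+1) := by
      intro i
      simp only [hq]
      rw [abs_of_nonpos (by
        have : (0:ℝ) ≤ min u (1/(i+1)) := le_min (le_of_lt hupos) (by positivity)
        linarith)]
      have : min u (1/(i+1)) ≤ 1/(i+1) := min_le_right _ _
      linarith
    have hqlt : ∀ i : ℕ, q i < u := by
      intro i
      simp only [hq]
      have : 0 < min u (1/(i+1)) := lt_min hupos (by positivity)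
      linarith
    obtain ⟨C, hCmem, hCu, hCfib⟩ := happrox q hq1 hq2
    obtain ⟨i, _, hCi⟩ := hCfib 0
    -- q i ∈ K, contradicting minimality
    have hqiK : q i ∈ K := by
      refine ⟨(hq1 i).1, (hq1 i).2, fun S'' hS'' hmem => ?_⟩
      have hKu := huK.2.2 C hCmem hCu
      have hstep := hpiece (q i) u (le_of_lt (hqlt i)) C hCmem hCi hCu
      have := section_welldef T' hCmem hS'' hCi hmem
      linarith [hKu, hstep, this.ge, this.le]
    have := csInf_le hKbdd hqiK
    have := hqlt i
    linarith
  -- conclude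
  have h0K : (0:ℝ) ∈ K := hu_eq ▸ huK
  have := h0K.2.2 Sb hSb (by rw [show p 0 = x from ptv_zero x v]; exact hb)
  rw [show p 0 = x from ptv_zero x v] at this
  simpa using this

end AuxD2

section AuxE
open Polynomial

/-- Sign of a product of nonzero reals. -/
lemma prod_sign {ι : Type*} [DecidableEq ι] (s : Finset ι) (f : ι → ℝ)
    (h : ∀ i ∈ s, f i ≠ 0) :
    0 < (-1:ℝ)^((s.filter (fun i => f i < 0)).card) * ∏ i ∈ s, f i := by
  classical
  revert h
  induction s using Finset.induction_on with
  | empty => intro h; simp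
  | @insert a s' ha ih =>
    intro h
    have hne := h a (Finset.mem_insert_self a s')
    have ih' := ih (fun i hi => h i (Finset.mem_insert_of_mem hi))
    rw [Finset.filter_insert, Finset.prod_insert ha]
    by_cases hfa : f a < 0
    · rw [if_pos hfa, Finset.card_insert_of_notMem (fun hc => ha (Finset.mem_filter.mp hc).1)]
      rw [pow_succ]
      nlinarith
    · rw [if_neg hfa]
      have : 0 < f a := lt_of_le_of_ne (not_lt.mp hfa) (Ne.symm hne)
      nlinarith

/-- The divided-difference weights of `d+2` increasing nodes. -/
noncomputable def ddw {d : ℕ} (b : Fin (d+2) → ℕ) (k : Fin (d+2)) : ℝ :=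
  ∏ l ∈ Finset.univ.erase k, (((b k : ℝ)) - (b l : ℝ))⁻¹

lemma ddw_ortho {d : ℕ} {b : Fin (d+2) → ℕ} (hb : StrictMono b) (r : ℕ) (hr : r ≤ d + 1) :
    ∑ k, ddw b k * (b k : ℝ)^r = if r = d + 1 then 1 else 0 := by
  classical
  set br : Fin (d+2) → ℝ := fun k => (b k : ℝ) with hbr
  have hbrmono : StrictMono br := fun a c hac => by
    exact_mod_cast Nat.cast_lt.mpr (hb hac)
  have hinj : Set.InjOn br ↑(Finset.univ : Finset (Fin (d+2))) := fun a _ c _ hac =>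
    hbrmono.injective hac
  have hdeg : (X^r : ℝ[X]).degree < (Finset.univ : Finset (Fin (d+2))).card := by
    rw [degree_X_pow, Finset.card_univ, Fintype.card_fin]
    exact_mod_cast Nat.lt_succ_of_le hr
  have hint := Lagrange.eq_interpolate (f := (X^r : ℝ[X])) hinj hdeg
  have hco := congrArg (fun p => Polynomial.coeff p (d+1)) hint
  simp only [Lagrange.interpolate, LinearMap.coe_mk, AddHom.coe_mk] at hco
  rw [coeff_X_pow] at hco
  rw [finset_sum_coeff] at hco
  have hbasis : ∀ k : Fin (d+2),
      (C ((X^r : ℝ[X]).eval (br k)) * Lagrange.basis Finset.univ br k).coeff (d+1)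
      = (br k)^r * ddw b k := by
    intro k
    rw [coeff_C_mul, eval_pow, eval_X]
    congr 1
    show (Lagrange.basis Finset.univ br k).coeff (d+1) = _
    rw [Lagrange.basis]
    have : ∀ j ∈ Finset.univ.erase k, Lagrange.basisDivisor (br k) (br j)
        = C ((br k - br j)⁻¹) * (X - C (br j)) := fun j _ => rfl
    rw [Finset.prod_congr rfl this, Finset.prod_mul_distrib, ← map_prod]
    rw [coeff_C_mul]
    have hmon : (∏ j ∈ Finset.univ.erase k, (X - C (br j))).Monic :=
      monic_prod_of_monic _ _ (fun j _ => monic_X_sub_C _)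
    have hcardd : (Finset.univ.erase k).card = d + 1 := by
      rw [Finset.card_erase_of_mem (Finset.mem_univ k), Finset.card_univ, Fintype.card_fin]
      omega
    have hdegp : (∏ j ∈ Finset.univ.erase k, (X - C (br j))).natDegree = d + 1 := by
      rw [natDegree_prod_of_monic _ _ (fun j _ => monic_X_sub_C _)]
      simp only [natDegree_X_sub_C]
      simp [hcardd]
    have := hmon.coeff_natDegree
    rw [hdegp] at this
    rw [this, mul_one, ddw]
  rw [Finset.sum_congr rfl (fun k _ => hbasis k)] at hco
  have heq : ∑ k, ddw b k * (b k : ℝ)^r = ∑ k, (br k)^r * ddw b k :=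
    Finset.sum_congr rfl fun k _ => by rw [hbr]; ring
  rw [heq, ← hco]
  by_cases hrd : r = d + 1
  · rw [if_pos hrd, if_pos hrd.symm]
  · rw [if_neg (fun hh => hrd hh.symm), if_neg hrd]

lemma ddw_sign {d : ℕ} {b : Fin (d+2) → ℕ} (hb : StrictMono b) (k : Fin (d+2)) :
    0 < (-1:ℝ)^(d+1-k.1) * ddw b k := by
  classical
  set br : Fin (d+2) → ℝ := fun k => (b k : ℝ) with hbr
  have hbrmono : StrictMono br := fun a c hac => by
    exact_mod_cast Nat.cast_lt.mpr (hb hac)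
  set P := ∏ l ∈ Finset.univ.erase k, (br k - br l) with hP
  have hfne : ∀ l ∈ Finset.univ.erase k, br k - br l ≠ 0 := by
    intro l hl hc
    have h1 : l ≠ k := (Finset.mem_erase.mp hl).1
    have h2 : br l = br k := by linarith
    exact h1 (hbrmono.injective h2)
  have hsign := prod_sign (Finset.univ.erase k) (fun l => br k - br l) hfne
  have hfilt : (Finset.univ.erase k).filter (fun l => br k - br l < 0) = Finset.Ioi k := by
    ext l
    constructor
    · intro hl
      rw [Finset.mem_filter] at hl
      have h1 : br k < br l := by linarith [hl.2]
      exact Finset.mem_Ioi.mpr (hbrmono.lt_iff_lt.mp h1)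
    · intro hl
      have hkl := Finset.mem_Ioi.mp hl
      refine Finset.mem_filter.mpr ⟨Finset.mem_erase.mpr ⟨ne_of_gt hkl, Finset.mem_univ l⟩, ?_⟩
      have := hbrmono hkl
      linarith
  rw [hfilt, Fin.card_Ioi] at hsign
  have hsign' : 0 < (-1:ℝ)^(d+2-1-k.1) * P := hsign
  have hPne : P ≠ 0 := by
    intro hc
    rw [hc, mul_zero] at hsign'
    exact lt_irrefl 0 hsign'
  have hgP : ddw b k = P⁻¹ := by
    rw [ddw, hP, ← Finset.prod_inv_distrib]
  rw [hgP]
  have : ((-1:ℝ)^(d+2-1-k.1) * P)⁻¹ = (-1:ℝ)^(d+2-1-k.1) * P⁻¹ := by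
    rw [mul_inv]
    congr 1
    rcases Nat.even_or_odd (d+2-1-k.1) with he | ho
    · rw [he.neg_one_pow]; norm_num
    · rw [ho.neg_one_pow]; norm_num
  have h22 : d + 2 - 1 - k.1 = d + 1 - k.1 := by omega
  rw [← h22]
  rw [← this]
  exact inv_pos.mpr hsign'

end AuxE

section AuxE2

lemma sum_fiber_pow {ι : Type*} [DecidableEq ι] (s : Finset ι) (t : Finset ℕ)
    (bmap : ι → ℕ) (f : ι → ℝ) (hmap : ∀ k ∈ s, bmap k ∈ t) (r : ℕ) :
    ∑ j ∈ t, (∑ k ∈ s.filter (fun k => bmap k = j), f k) * (j:ℝ)^r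
      = ∑ k ∈ s, f k * (bmap k : ℝ)^r := by
  classical
  rw [← Finset.sum_fiberwise_of_maps_to hmap (fun k => f k * (bmap k:ℝ)^r)]
  refine Finset.sum_congr rfl fun j hj => ?_
  rw [Finset.sum_mul]
  refine Finset.sum_congr rfl fun k hk => ?_
  rw [(Finset.mem_filter.mp hk).2]

/-- An alternating chain whose positive part lies in a simplex of the lower triangulation
and negative part in a simplex of the upper one contradicts `WeaklyLower`. -/
lemma chain_contra {d : ℕ} {ST ST' : Finset ℕ} (hw : WeaklyLower d ST ST')
    {c : ℕ → ℝ} {b : Fin (d+2) → ℕ} (hmono : StrictMono b)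
    (hsign : ∀ k : Fin (d+2), 0 < (-1:ℝ)^(d+1-k.1) * c (b k))
    (hhostP : ∀ k : Fin (d+2), 0 < c (b k) → b k ∈ ST)
    (hhostN : ∀ k : Fin (d+2), c (b k) < 0 → b k ∈ ST') : False := by
  classical
  set G : Fin (d+2) → ℝ := ddw b with hG
  have hgc : ∀ k, (0 < G k ↔ 0 < c (b k)) := by
    intro k
    have h1 := ddw_sign hmono k
    have h2 := hsign k
    rcases Nat.even_or_odd (d+1-k.1) with he | ho
    · rw [he.neg_one_pow, one_mul] at h1 h2
      exact ⟨fun _ => h2, fun _ => h1⟩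
    · rw [ho.neg_one_pow, neg_one_mul, neg_pos] at h1 h2
      constructor
      · intro hp; linarith
      · intro hp; linarith
  have hGne : ∀ k, G k ≠ 0 := by
    intro k hc0
    have := ddw_sign hmono k
    rw [← hG, hc0, mul_zero] at this
    exact lt_irrefl 0 this
  have hcne : ∀ k, c (b k) ≠ 0 := by
    intro k hc0
    have := hsign k
    rw [hc0, mul_zero] at this
    exact lt_irrefl 0 this
  set E := Finset.univ.filter (fun k => 0 < G k) with hE
  set O := Finset.univ.filter (fun k => ¬ 0 < G k) with hO
  have hOneg : ∀ k ∈ O, G k < 0 := by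
    intro k hk
    have := (Finset.mem_filter.mp hk).2
    exact lt_of_le_of_ne (not_lt.mp this) (hGne k)
  have hsplit : ∀ r : ℕ, r ≤ d + 1 →
      (∑ k ∈ E, G k * (b k:ℝ)^r) + (∑ k ∈ O, G k * (b k:ℝ)^r)
        = if r = d+1 then 1 else 0 := by
    intro r hr
    rw [hE, hO, Finset.sum_filter_add_sum_filter_not]
    exact ddw_ortho hmono r hr
  have hlastE : Fin.last (d+1) ∈ E := by
    rw [hE, Finset.mem_filter]
    refine ⟨Finset.mem_univ _, ?_⟩
    have := ddw_sign hmono (Fin.last (d+1))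
    have hval : d + 1 - (Fin.last (d+1)).1 = 0 := by
      simp [Fin.last]
    rw [hval, pow_zero, one_mul] at this
    exact this
  set γ := ∑ k ∈ E, G k with hγ
  have hγpos : 0 < γ := by
    refine Finset.sum_pos (fun k hk => (Finset.mem_filter.mp hk).2) ⟨_, hlastE⟩
  set wP : ℕ → ℝ := fun j => (∑ k ∈ E.filter (fun k => b k = j), G k) / γ with hwP
  set wN : ℕ → ℝ := fun j => (∑ k ∈ O.filter (fun k => b k = j), -G k) / γ with hwN
  set xs : Fin d → ℝ := fun kk => ∑ j ∈ ST, wP j * (j:ℝ)^(kk.1+1) with hxs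
  have hmapE : ∀ k ∈ E, b k ∈ ST := fun k hk =>
    hhostP k ((hgc k).mp (Finset.mem_filter.mp hk).2)
  have hmapO : ∀ k ∈ O, b k ∈ ST' := by
    intro k hk
    refine hhostN k ?_
    have h1 := hOneg k hk
    have h2 := (hgc k).not
    have h3 : ¬ 0 < c (b k) := by
      rw [← h2]
      exact not_lt.mpr (le_of_lt h1)
    exact lt_of_le_of_ne (not_lt.mp h3) (hcne k)
  -- sums over ST/ST' reduce to chain sums
  have hsumP : ∀ r : ℕ, ∑ j ∈ ST, wP j * (j:ℝ)^r = (∑ k ∈ E, G k * (b k:ℝ)^r) / γ := by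
    intro r
    rw [hwP]
    rw [← sum_fiber_pow E ST b G hmapE r, Finset.sum_div]
    refine Finset.sum_congr rfl fun j hj => by rw [div_mul_eq_mul_div]
  have hsumN : ∀ r : ℕ, ∑ j ∈ ST', wN j * (j:ℝ)^r = (∑ k ∈ O, -G k * (b k:ℝ)^r) / γ := by
    intro r
    rw [hwN]
    rw [← sum_fiber_pow O ST' b (fun k => -G k) hmapO r, Finset.sum_div]
    refine Finset.sum_congr rfl fun j hj => by rw [div_mul_eq_mul_div]
  have hrepP : isRep d ST wP xs := by
    refine ⟨?_, ?_, ?_, fun kk => rfl⟩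
    · intro j
      apply div_nonneg _ (le_of_lt hγpos)
      exact Finset.sum_nonneg fun k hk =>
        le_of_lt (Finset.mem_filter.mp (Finset.mem_filter.mp hk).1).2
    · intro j hj
      simp only [hwP]
      have : E.filter (fun k => b k = j) = ∅ := by
        rw [Finset.filter_eq_empty_iff]
        intro k hk hbk
        exact hj (hbk ▸ hmapE k hk)
      rw [this, Finset.sum_empty, zero_div]
    · have := hsumP 0
      simp only [pow_zero, mul_one] at this
      rw [this, ← hγ, div_self (ne_of_gt hγpos)]
  have hrepN : isRep d ST' wN xs := by
    refine ⟨?_, ?_, ?_, ?_⟩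
    · intro j
      apply div_nonneg _ (le_of_lt hγpos)
      refine Finset.sum_nonneg fun k hk => ?_
      have := hOneg k (Finset.mem_filter.mp hk).1
      linarith
    · intro j hj
      simp only [hwN]
      have : O.filter (fun k => b k = j) = ∅ := by
        rw [Finset.filter_eq_empty_iff]
        intro k hk hbk
        exact hj (hbk ▸ hmapO k hk)
      rw [this, Finset.sum_empty, zero_div]
    · have h0 := hsumN 0
      simp only [pow_zero, mul_one] at h0
      have hs0 := hsplit 0 (by omega)
      rw [if_neg (by omega)] at hs0
      simp only [pow_zero, mul_one] at hs0
      rw [h0]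
      have : ∑ k ∈ O, -G k = γ := by
        rw [hγ]
        have : ∑ k ∈ O, -G k = -∑ k ∈ O, G k := by rw [Finset.sum_neg_distrib]
        rw [this]
        linarith
      rw [this, div_self (ne_of_gt hγpos)]
    · intro kk
      rw [hsumN (kk.1+1), hxs]
      show _ = ∑ j ∈ ST, wP j * (j:ℝ)^(kk.1+1)
      rw [hsumP (kk.1+1)]
      congr 1
      have hs := hsplit (kk.1+1) (by omega)
      rw [if_neg (by omega)] at hs
      have : ∑ k ∈ O, -G k * ((b k):ℝ)^(kk.1+1) = -∑ k ∈ O, G k * ((b k):ℝ)^(kk.1+1) := by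
        rw [← Finset.sum_neg_distrib]
        exact Finset.sum_congr rfl fun k _ => by ring
      rw [this]
      linarith
  have hle := weaklyLower_pointwise hw hrepP hrepN
  rw [hsumP (d+1), hsumN (d+1)] at hle
  have hs := hsplit (d+1) (le_refl _)
  rw [if_pos rfl] at hs
  have hON : ∑ k ∈ O, -G k * ((b k):ℝ)^(d+1) = -∑ k ∈ O, G k * ((b k):ℝ)^(d+1) := by
    rw [← Finset.sum_neg_distrib]
    exact Finset.sum_congr rfl fun k _ => by ring
  rw [hON] at hle
  have hmul := (div_le_div_iff_of_pos_right hγpos).mp hle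
  linarith
end AuxE2

section AuxF
open Polynomial

variable (D : Finset ℕ) (c : ℕ → ℝ)

/-- Greedy step: the largest element of `D` below `a` with sign opposite to `c a`
(or `a` itself if none exists). -/
noncomputable def gstep (a : ℕ) : ℕ :=
  WithBot.unbotD a (D.filter (fun j => j < a ∧ c j * c a < 0)).max

lemma gstep_le (a : ℕ) : gstep D c a ≤ a := by
  classical
  rcases hmax : (D.filter (fun j => j < a ∧ c j * c a < 0)).max with _ | j
  · rw [gstep, hmax]; rfl
  · have hj := Finset.mem_of_max hmax
    have := (Finset.mem_filter.mp hj).2.1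
    rw [gstep, hmax]
    exact le_of_lt this

lemma gstep_mem {a : ℕ} (h : gstep D c a ≠ a) :
    gstep D c a ∈ D ∧ gstep D c a < a ∧ c (gstep D c a) * c a < 0 := by
  classical
  rcases hmax : (D.filter (fun j => j < a ∧ c j * c a < 0)).max with _ | j
  · rw [gstep, hmax] at h
    exact absurd rfl h
  · have hj := Finset.mem_of_max hmax
    rw [Finset.mem_filter] at hj
    rw [gstep, hmax]
    exact ⟨hj.1, hj.2.1, hj.2.2⟩

lemma gstep_max {a j : ℕ} (hj : j ∈ D) (hja : j < a) (hs : c j * c a < 0) :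
    j ≤ gstep D c a := by
  classical
  have hjf : j ∈ D.filter (fun j => j < a ∧ c j * c a < 0) :=
    Finset.mem_filter.mpr ⟨hj, hja, hs⟩
  have hle := Finset.le_max hjf
  rcases hmax : (D.filter (fun j => j < a ∧ c j * c a < 0)).max with _ | m
  · rw [hmax] at hle; exact absurd hle (WithBot.not_coe_le_bot j)
  · rw [hmax] at hle
    rw [gstep, hmax]
    show j ≤ m
    exact WithBot.coe_le_coe.mp hle

lemma gstep_stuck {a : ℕ} (h : gstep D c a = a) :
    ∀ j ∈ D, j < a → 0 ≤ c j * c a := by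
  classical
  intro j hj hja
  by_contra hneg
  have h1 : c j * c a < 0 := not_le.mp hneg
  have hjf : j ∈ D.filter (fun j => j < a ∧ c j * c a < 0) :=
    Finset.mem_filter.mpr ⟨hj, hja, h1⟩
  rcases hmax : (D.filter (fun j => j < a ∧ c j * c a < 0)).max with _ | m
  · have : (D.filter (fun j => j < a ∧ c j * c a < 0)) = ∅ := Finset.max_eq_bot.mp hmax
    rw [this] at hjf
    exact absurd hjf (Finset.notMem_empty j)
  · have hm := Finset.mem_of_max hmax
    have hma : m < a := (Finset.mem_filter.mp hm).2.1
    rw [gstep, hmax] at h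
    exact absurd h (by show m ≠ a; omega)

/-- Basic facts about the greedy chain `A i = gstep^[i] a0` while it keeps moving. -/
lemma gchain_facts {a0 : ℕ} (ha0D : a0 ∈ D) (ha0 : c a0 < 0) (Lb : ℕ)
    (hmoves : ∀ i < Lb, gstep D c ((gstep D c)^[i] a0) ≠ (gstep D c)^[i] a0) :
    (∀ i ≤ Lb, (gstep D c)^[i] a0 ∈ D) ∧
    (∀ i l, i < l → l ≤ Lb → (gstep D c)^[l] a0 < (gstep D c)^[i] a0) ∧
    (∀ i ≤ Lb, 0 < (-1:ℝ)^(i+1) * c ((gstep D c)^[i] a0)) := by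
  set A : ℕ → ℕ := fun i => (gstep D c)^[i] a0 with hA
  have hsucc : ∀ i, A (i+1) = gstep D c (A i) := by
    intro i
    rw [hA]
    exact Function.iterate_succ_apply' _ _ _
  have hmem : ∀ i ≤ Lb, A i ∈ D := by
    intro i hi
    induction i with
    | zero => exact ha0D
    | succ i ih =>
      have hmove := hmoves i (by omega)
      rw [hsucc i]
      exact (gstep_mem D c hmove).1
  have hstep : ∀ i < Lb, A (i+1) < A i ∧ c (A (i+1)) * c (A i) < 0 := by
    intro i hi
    have hmove := hmoves i hi
    have := gstep_mem D c hmove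
    rw [← hsucc i] at this
    exact ⟨this.2.1, this.2.2⟩
  have hdec : ∀ i l, i < l → l ≤ Lb → A l < A i := by
    intro i l hil hl
    induction l with
    | zero => omega
    | succ l ih =>
      have hl' := (hstep l (by omega)).1
      rcases Nat.lt_or_ge i l with h1 | h1
      · have := ih (by omega) (by omega)
        omega
      · have : i = l := by omega
        rw [this]
        exact hl'
  refine ⟨hmem, hdec, ?_⟩
  intro i hi
  induction i with
  | zero =>
    rw [pow_one]
    simpa [hA] using (by linarith : 0 < -c a0)
  | succ i ih =>
    have ih' := ih (by omega)
    have hs := (hstep i (by omega)).2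
    have hsq : ((-1:ℝ)^(i+1)) * ((-1:ℝ)^(i+1)) = 1 := by
      rw [← mul_pow]
      norm_num
    have key : (-1:ℝ)^(i+1+1) * c (A (i+1))
        = -(((-1:ℝ)^(i+1)) * c (A (i+1))) := by
      rw [pow_succ]
      ring
    nlinarith [ih', hs, hsq]

/-- Downward-closed subsets of `range L` are ranges. -/
lemma downclosed_eq_range {L : ℕ} {s : Finset ℕ} (hs : s ⊆ Finset.range L)
    (hdc : ∀ i ∈ s, ∀ i' < i, i' ∈ s) : s = Finset.range s.card := by
  classical
  have hlt : ∀ i ∈ s, i < s.card := by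
    intro i hi
    have hsub : Finset.range (i+1) ⊆ s := by
      intro i' hi'
      rw [Finset.mem_range] at hi'
      rcases Nat.lt_or_ge i' i with h1 | h1
      · exact hdc i hi i' h1
      · have : i' = i := by omega
        rw [this]; exact hi
    have := Finset.card_le_card hsub
    rw [Finset.card_range] at this
    omega
  have hsub2 : s ⊆ Finset.range s.card := fun i hi => Finset.mem_range.mpr (hlt i hi)
  exact Finset.eq_of_subset_of_card_le hsub2 (by rw [Finset.card_range])

/-- The dichotomy: either an alternating `(d+2)`-chain ending positive exists strictly
below the (negative) top element, or the `(d+1)`-power sum is nonpositive. -/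
lemma dichotomy {d : ℕ} (hone : ∀ j ∈ D, 1 ≤ j)
    (horth : ∀ r : ℕ, r ≤ d → ∑ j ∈ D, c j * (j:ℝ)^r = 0)
    {a0 : ℕ} (ha0D : a0 ∈ D) (ha0neg : c a0 < 0)
    (ha0max : ∀ j ∈ D, c j ≠ 0 → j ≤ a0) :
    (∃ b : Fin (d+2) → ℕ, StrictMono b ∧ (∀ k, b k ∈ D) ∧ (∀ k, b k < a0) ∧
      (∀ k : Fin (d+2), 0 < (-1:ℝ)^(d+1-k.1) * c (b k))) ∨
    (∑ j ∈ D, c j * (j:ℝ)^(d+1) ≤ 0) := by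
  classical
  set A : ℕ → ℕ := fun i => (gstep D c)^[i] a0 with hA
  have hsucc : ∀ i, A (i+1) = gstep D c (A i) := by
    intro i
    rw [hA]
    exact Function.iterate_succ_apply' _ _ _
  by_cases hstuck : ∃ i, i ≤ d+1 ∧ gstep D c (A i) = A i
  · -- Q-polynomial case
    right
    set L := Nat.find hstuck with hL
    obtain ⟨hLle, hLfix⟩ : L ≤ d + 1 ∧ gstep D c (A L) = A L := Nat.find_spec hstuck
    have hmoves : ∀ i < L, gstep D c (A i) ≠ A i := by
      intro i hi hfix
      rcases Nat.lt_or_ge i (d+2) with h1 | h1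
      · exact Nat.find_min hstuck hi ⟨by omega, hfix⟩
      · omega
    obtain ⟨hmem0, hdec0, hsgn0⟩ := gchain_facts D c ha0D ha0neg L hmoves
    have hmem : ∀ i ≤ L, A i ∈ D := hmem0
    have hdec : ∀ i l, i < l → l ≤ L → A l < A i := hdec0
    have hsgn : ∀ i ≤ L, 0 < (-1:ℝ)^(i+1) * c (A i) := hsgn0
    -- the polynomial
    set Q : Polynomial ℝ := (X - C (2⁻¹ : ℝ))^(d+1-L)
        * ∏ i ∈ Finset.range L, (X - C ((A (i+1) : ℝ) + 2⁻¹)) with hQ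
    have hQmonic : Q.Monic := by
      refine Polynomial.Monic.mul ((monic_X_sub_C _).pow _) ?_
      exact monic_prod_of_monic _ _ (fun i _ => monic_X_sub_C _)
    have hQdeg : Q.natDegree = d + 1 := by
      rw [hQ, Polynomial.Monic.natDegree_mul ((monic_X_sub_C _).pow _)
        (monic_prod_of_monic _ _ (fun i _ => monic_X_sub_C _)),
        natDegree_pow, natDegree_X_sub_C,
        natDegree_prod_of_monic _ _ (fun i _ => monic_X_sub_C _)]
      simp only [natDegree_X_sub_C]
      rw [Finset.sum_const, Finset.card_range, smul_eq_mul, mul_one, mul_one]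
      omega
    -- per-term sign
    have hterm : ∀ j ∈ D, c j * Q.eval (j:ℝ) ≤ 0 := by
      intro j hj
      by_cases hcj : c j = 0
      · rw [hcj, zero_mul]
      have hja0 : j ≤ a0 := ha0max j hj hcj
      -- the count of chain elements ≥ j
      set s := (Finset.range L).filter (fun i => j ≤ A (i+1)) with hs
      have hdc : ∀ i ∈ s, ∀ i' < i, i' ∈ s := by
        intro i hi i' hi'
        rw [hs, Finset.mem_filter, Finset.mem_range] at hi ⊢
        refine ⟨by omega, ?_⟩
        have := hdec (i'+1) (i+1) (by omega) (by omega)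
        omega
      have hrange := downclosed_eq_range (by rw [hs]; exact Finset.filter_subset _ _) hdc
      set kj := s.card with hkj
      have hkjL : kj ≤ L := by
        rw [hkj, hs]
        calc s.card ≤ (Finset.range L).card := by rw [hs]; exact Finset.card_le_card (Finset.filter_subset _ _)
          _ = L := Finset.card_range L
      -- anchor facts
      have hanchor : j ≤ A kj := by
        rcases Nat.eq_zero_or_pos kj with h0 | hpos
        · rw [h0]
          show j ≤ a0
          exact hja0
        · have : kj - 1 ∈ s := by
            rw [hrange, Finset.mem_range]
            omega
          rw [hs, Finset.mem_filter] at this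
          have h2 := this.2
          have : kj - 1 + 1 = kj := by omega
          rwa [this] at h2
      have hnext : kj < L → A (kj+1) < j := by
        intro hkL
        have : kj ∉ s := by
          rw [hrange]
          exact fun hc => by rw [Finset.mem_range] at hc; omega
        rw [hs, Finset.mem_filter, Finset.mem_range] at this
        push_neg at this
        exact this hkL
      -- region sign: 0 ≤ c j * c (A kj)
      have hreg : 0 ≤ c j * c (A kj) := by
        rcases eq_or_lt_of_le hanchor with heq | hlt
        · rw [← heq]
          exact mul_self_nonneg _
        · rcases Nat.lt_or_ge kj L with h1 | h1
          · by_contra hneg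
            have := gstep_max D c hj hlt (not_le.mp hneg)
            rw [← hsucc kj] at this
            have := hnext h1
            omega
          · have hkjL' : kj = L := by omega
            rw [hkjL']
            rw [hkjL'] at hlt
            exact gstep_stuck D c hLfix j hj hlt
      -- sign of c j
      have hsgnk := hsgn kj hkjL
      have hcjsign : 0 < (-1:ℝ)^(kj+1) * c j := by
        have hcA : c (A kj) ≠ 0 := by
          intro hc0
          rw [hc0, mul_zero] at hsgnk
          exact lt_irrefl 0 hsgnk
        have hsq : ((-1:ℝ)^(kj+1)) * ((-1:ℝ)^(kj+1)) = 1 := by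
          rw [← mul_pow]; norm_num
        rcases lt_trichotomy ((-1:ℝ)^(kj+1) * c j) 0 with hn | hz | hp
        · exfalso
          nlinarith [hreg, hsgnk, hsq, hn]
        · exfalso
          have : c j = 0 := by
            rcases Nat.even_or_odd (kj+1) with he | ho
            · rw [he.neg_one_pow, one_mul] at hz; exact hz
            · rw [ho.neg_one_pow, neg_one_mul, neg_eq_zero] at hz; exact hz
          exact hcj this
        · exact hp
      -- sign of the product part
      have hprodsign : 0 < (-1:ℝ)^kj *
          ∏ i ∈ Finset.range L, ((j:ℝ) - ((A (i+1):ℝ) + 2⁻¹)) := by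
        have hfne : ∀ i ∈ Finset.range L, (j:ℝ) - ((A (i+1):ℝ) + 2⁻¹) ≠ 0 := by
          intro i _
          intro hc
          rw [sub_eq_zero] at hc
          rcases le_or_gt j (A (i+1)) with hle | hlt
          · have h1 : (j:ℝ) ≤ (A (i+1):ℝ) := by exact_mod_cast hle
            rw [hc] at h1
            norm_num at h1
          · have h1 : (A (i+1):ℝ) + 1 ≤ (j:ℝ) := by exact_mod_cast hlt
            rw [hc] at h1
            norm_num at h1
        have := prod_sign (Finset.range L) (fun i => (j:ℝ) - ((A (i+1):ℝ) + 2⁻¹)) hfne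
        have hcount : ((Finset.range L).filter
            (fun i => (j:ℝ) - ((A (i+1):ℝ) + 2⁻¹) < 0)).card = kj := by
          have hfeq : (Finset.range L).filter
              (fun i => (j:ℝ) - ((A (i+1):ℝ) + 2⁻¹) < 0) = s := by
            rw [hs]
            refine Finset.filter_congr fun i hi => ?_
            constructor
            · intro hlt
              have hlt' : (j:ℝ) - ((A (i+1):ℝ) + 2⁻¹) < 0 := hlt
              by_contra hcon
              have h2 : A (i+1) < j := not_le.mp hcon
              have h3 : (A (i+1):ℝ) + 1 ≤ (j:ℝ) := by exact_mod_cast h2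
              linarith
            · intro hle
              have hle' : j ≤ A (i+1) := hle
              have h3 : (j:ℝ) ≤ (A (i+1):ℝ) := by exact_mod_cast hle'
              show (j:ℝ) - ((A (i+1):ℝ) + 2⁻¹) < 0
              linarith
          rw [hfeq]
        rw [hcount] at this
        exact this
      -- base positive factor
      have hbase : 0 < ((j:ℝ) - 2⁻¹)^(d+1-L) := by
        apply pow_pos
        have : (1:ℝ) ≤ (j:ℝ) := by exact_mod_cast hone j hj
        linarith
      -- combine
      have heval : Q.eval (j:ℝ) = ((j:ℝ) - 2⁻¹)^(d+1-L)
          * ∏ i ∈ Finset.range L, ((j:ℝ) - ((A (i+1):ℝ) + 2⁻¹)) := by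
        rw [hQ]
        rw [eval_mul, eval_pow, eval_sub, eval_X, eval_C, eval_prod]
        congr 1
        refine Finset.prod_congr rfl fun i _ => ?_
        rw [eval_sub, eval_X, eval_C]
      have hsignmul : ((-1:ℝ)^kj * ∏ i ∈ Finset.range L, ((j:ℝ) - ((A (i+1):ℝ) + 2⁻¹)))
          * ((-1:ℝ)^(kj+1) * c j)
          = -(c j * ∏ i ∈ Finset.range L, ((j:ℝ) - ((A (i+1):ℝ) + 2⁻¹))) := by
        have hm1 : ((-1:ℝ)^kj) * ((-1:ℝ)^(kj+1)) = -1 := by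
          rw [← pow_add]
          have hodd : Odd (kj + (kj+1)) := by
            refine ⟨kj, by omega⟩
          rw [hodd.neg_one_pow]
        calc ((-1:ℝ)^kj * ∏ i ∈ Finset.range L, ((j:ℝ) - ((A (i+1):ℝ) + 2⁻¹)))
            * ((-1:ℝ)^(kj+1) * c j)
            = (((-1:ℝ)^kj) * ((-1:ℝ)^(kj+1)))
              * (c j * ∏ i ∈ Finset.range L, ((j:ℝ) - ((A (i+1):ℝ) + 2⁻¹))) := by ring
          _ = -(c j * ∏ i ∈ Finset.range L, ((j:ℝ) - ((A (i+1):ℝ) + 2⁻¹))) := by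
              rw [hm1]; ring
      have hcp : c j * ∏ i ∈ Finset.range L, ((j:ℝ) - ((A (i+1):ℝ) + 2⁻¹)) < 0 := by
        nlinarith [hprodsign, hcjsign, hsignmul]
      rw [heval]
      nlinarith [hbase, hcp]
    -- sum identity
    have hsum : ∑ j ∈ D, c j * Q.eval (j:ℝ) = ∑ j ∈ D, c j * (j:ℝ)^(d+1) := by
      have hdlt : Q.natDegree < d + 2 := by omega
      calc ∑ j ∈ D, c j * Q.eval (j:ℝ)
          = ∑ j ∈ D, ∑ r ∈ Finset.range (d+2), c j * (Q.coeff r * (j:ℝ)^r) := by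
            refine Finset.sum_congr rfl fun j _ => ?_
            rw [eval_eq_sum_range' hdlt, Finset.mul_sum]
        _ = ∑ r ∈ Finset.range (d+2), ∑ j ∈ D, c j * (Q.coeff r * (j:ℝ)^r) :=
            Finset.sum_comm
        _ = ∑ r ∈ Finset.range (d+2), Q.coeff r * ∑ j ∈ D, c j * (j:ℝ)^r := by
            refine Finset.sum_congr rfl fun r _ => ?_
            rw [Finset.mul_sum]
            exact Finset.sum_congr rfl fun j _ => by ring
        _ = ∑ j ∈ D, c j * (j:ℝ)^(d+1) := by
            rw [Finset.sum_range_succ]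
            have hzero : ∀ r ∈ Finset.range (d+1),
                Q.coeff r * ∑ j ∈ D, c j * (j:ℝ)^r = 0 := by
              intro r hr
              rw [Finset.mem_range] at hr
              rw [horth r (by omega), mul_zero]
            rw [Finset.sum_congr rfl hzero, Finset.sum_const, smul_zero, zero_add]
            have : Q.coeff (d+1) = 1 := by
              have := hQmonic.coeff_natDegree
              rwa [hQdeg] at this
            rw [this, one_mul]
    rw [← hsum]
    exact Finset.sum_nonpos hterm
  · -- chain case
    left
    push_neg at hstuck
    have hmoves : ∀ i < d+2, gstep D c (A i) ≠ A i := fun i hi =>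
      hstuck i (by omega)
    obtain ⟨hmem0, hdec0, hsgn0⟩ := gchain_facts D c ha0D ha0neg (d+2) hmoves
    have hmem : ∀ i ≤ d+2, A i ∈ D := hmem0
    have hdec : ∀ i l, i < l → l ≤ d+2 → A l < A i := hdec0
    have hsgn : ∀ i ≤ d+2, 0 < (-1:ℝ)^(i+1) * c (A i) := hsgn0
    refine ⟨fun k => A (d+2-k.1), ?_, ?_, ?_, ?_⟩
    · intro k l hkl
      exact hdec (d+2-l.1) (d+2-k.1) (by omega) (by omega)
    · intro k
      exact hmem _ (by omega)
    · intro k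
      have : A (d+2-k.1) < A 0 := hdec 0 (d+2-k.1) (by omega) (by omega)
      simpa [hA] using this
    · intro k
      have hk := hsgn (d+2-k.1) (by omega)
      have hpow : (-1:ℝ)^(d+2-k.1+1) = (-1:ℝ)^(d+1-k.1) := by
        have h1 : d+2-k.1+1 = (d+1-k.1) + 2 := by omega
        rw [h1, pow_add]
        norm_num
      rwa [hpow] at hk

end AuxF

section AuxG

lemma rep_sum_eq {d : ℕ} {S S' : Finset ℕ} {w : ℕ → ℝ} {x : Fin d → ℝ}
    (hw : isRep d S w x) (hsupp : ∀ j, j ∉ S' → w j = 0) (f : ℕ → ℝ) :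
    ∑ j ∈ S', w j * f j = ∑ j ∈ S, w j * f j := by
  have h1 : ∑ j ∈ S', w j * f j = ∑ j ∈ S' ∩ S, w j * f j := by
    refine (Finset.sum_subset Finset.inter_subset_left ?_).symm
    intro j hj hj2
    have : j ∉ S := fun hc => hj2 (Finset.mem_inter.mpr ⟨hj, hc⟩)
    rw [hw.2.1 j this, zero_mul]
  have h2 : ∑ j ∈ S, w j * f j = ∑ j ∈ S' ∩ S, w j * f j := by
    refine (Finset.sum_subset Finset.inter_subset_right ?_).symm
    intro j hj hj2
    have : j ∉ S' := fun hc => hj2 (Finset.mem_inter.mpr ⟨hc, hj⟩)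
    rw [hsupp j this, zero_mul]
  rw [h1, h2]

lemma rep_retarget {d : ℕ} {S S' : Finset ℕ} {w : ℕ → ℝ} {x : Fin d → ℝ}
    (hw : isRep d S w x) (hsupp : ∀ j, j ∉ S' → w j = 0) :
    isRep d S' w x := by
  refine ⟨hw.1, hsupp, ?_, ?_⟩
  · have := rep_sum_eq hw hsupp (fun _ => 1)
    simp only [mul_one] at this
    rw [this, hw.2.2.1]
  · intro k
    have := rep_sum_eq hw hsupp (fun j => (j:ℝ)^(k.1+1))
    rw [this, hw.2.2.2 k]

lemma ptv_mem_of_endpoints {d : ℕ} {V : Finset ℕ} (x v : Fin d → ℝ) {lam s : ℝ}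
    (h0 : 0 ≤ s) (hs : s ≤ lam) (hx : x ∈ simplexHull d V)
    (hl : ptv x v lam ∈ simplexHull d V) : ptv x v s ∈ simplexHull d V := by
  rcases eq_or_lt_of_le (le_trans h0 hs) with hlam0 | hlam0
  · have : s = 0 := by
      rcases eq_or_lt_of_le h0 with h | h
      · exact h.symm
      · exfalso; rw [← hlam0] at hs; linarith
    rw [this, ptv_zero]
    exact hx
  · have ha : (0:ℝ) ≤ 1 - s / lam := by
      rw [sub_nonneg, div_le_one hlam0]
      exact hs
    have hb : (0:ℝ) ≤ s / lam := div_nonneg h0 (le_of_lt hlam0)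
    have hab : (1 - s / lam) + s / lam = 1 := by ring
    have hconv := (convex_convexHull ℝ (mompt d '' ↑V)) hx hl ha hb hab
    have heq : (1 - s / lam) • x + (s / lam) • ptv x v lam = ptv x v s := by
      funext k
      simp only [Pi.add_apply, Pi.smul_apply, smul_eq_mul, ptv]
      field_simp
      ring
    rw [simplexHull]
    rw [← heq]
    exact hconv

end AuxG

section AuxH

lemma fSimps_cases {n : ℕ} {Ts : Finset (Finset ℕ)} {Sσ : Finset ℕ}
    (hσ : Sσ ∈ fSimps n Ts) :
    (Sσ ∈ Ts ∧ n ∉ Sσ) ∨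
      (∃ S ∈ Ts, n ∈ S ∧ n - 1 ∉ S ∧ Sσ = insert (n-1) (S.erase n)) := by
  classical
  rw [fSimps, Finset.mem_union] at hσ
  rcases hσ with h | h
  · left
    exact ⟨(Finset.mem_filter.mp h).1, (Finset.mem_filter.mp h).2⟩
  · right
    obtain ⟨S, hS, hEq⟩ := Finset.mem_image.mp h
    rw [Finset.mem_filter] at hS
    exact ⟨S, hS.1, hS.2.1, hS.2.2, hEq.symm⟩

/-- The walk case: `σ` is a (possibly) contracted simplex with parent `S ∈ T`, and the
`τ`-side value is realized by an honest `T'`-simplex at `x`. -/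
lemma walk_case {n d : ℕ} (hn : d + 2 ≤ n) {T T' : Triangulation n d} (h : le₂ T T')
    {S : Finset ℕ} (hS : S ∈ T.simps) (hnS : n ∈ S) (hmS : n - 1 ∉ S)
    {S'h : Finset ℕ} (hS'h : S'h ∈ T'.simps)
    {e t : ℕ → ℝ} {x : Fin d → ℝ}
    (he : isRep d (insert (n-1) (S.erase n)) e x)
    (ht : isRep d S'h t x) :
    ∑ j ∈ insert (n-1) (S.erase n), e j * (j:ℝ)^(d+1)
      ≤ ∑ j ∈ S'h, t j * (j:ℝ)^(d+1) := by
  classical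
  set m := n - 1 with hmdef
  have hm : m + 1 = n := by omega
  have hm1 : 1 ≤ m := by omega
  set v := vdir d m n with hv
  set lam := e m with hlam
  have hlam0 : 0 ≤ lam := he.1 m
  set Sσ := insert m (S.erase n) with hSσ
  have hmerase : m ∉ S.erase n := fun hc => hmS (Finset.mem_of_mem_erase hc)
  -- the shifted representative on S
  set eh : ℕ → ℝ := fun j => if j = n then e m else if j = m then 0 else e j with heh
  have hehval : ∀ j ∈ S.erase n, eh j = e j := by
    intro j hj
    have hj1 := Finset.mem_erase.mp hj
    have hjm : j ≠ m := fun hc => hmS (hc ▸ (Finset.mem_of_mem_erase hj))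
    simp only [heh, if_neg hj1.1, if_neg hjm]
  have hsummS : ∀ f : ℕ → ℝ, ∑ j ∈ S, eh j * f j
      = (∑ j ∈ S.erase n, e j * f j) + e m * f n := by
    intro f
    rw [← Finset.sum_erase_add S _ hnS]
    congr 1
    · exact Finset.sum_congr rfl fun j hj => by rw [hehval j hj]
    · simp only [heh, if_pos rfl]
  have hsumσ : ∀ f : ℕ → ℝ, ∑ j ∈ Sσ, e j * f j
      = e m * f m + ∑ j ∈ S.erase n, e j * f j := by
    intro f
    rw [hSσ, Finset.sum_insert hmerase]
  have hrepS : isRep d S eh (ptv x v lam) := by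
    refine ⟨?_, ?_, ?_, ?_⟩
    · intro j
      simp only [heh]
      split
      · exact he.1 m
      · split
        · exact le_refl 0
        · exact he.1 j
    · intro j hj
      have hjn : j ≠ n := fun hc => hj (hc ▸ hnS)
      simp only [heh, if_neg hjn]
      split
      · rfl
      · refine he.2.1 j ?_
        intro hc
        rw [hSσ] at hc
        rcases Finset.mem_insert.mp hc with h1 | h1
        · exact absurd h1 (by assumption)
        · exact hj (Finset.mem_of_mem_erase h1)
    · have h1 := hsummS (fun _ => 1)
      have h2 := hsumσ (fun _ => 1)
      simp only [mul_one] at h1 h2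
      rw [h1]
      have h3 := he.2.2.1
      rw [h2] at h3
      linarith
    · intro k
      have h1 := hsummS (fun j => (j:ℝ)^(k.1+1))
      have h2 := hsumσ (fun j => (j:ℝ)^(k.1+1))
      have hx := he.2.2.2 k
      rw [h2] at hx
      rw [h1]
      show _ = x k + lam * v k
      rw [hv, vdir, ← hx, hlam]
      ring
  -- hulls
  have hSsub : S ⊆ Finset.Icc 1 n := T.subset_vertices S hS
  have hSσsub : Sσ ⊆ Finset.Icc 1 n := by
    rw [hSσ]
    intro j hj
    rcases Finset.mem_insert.mp hj with h1 | h1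
    · rw [h1]; rw [Finset.mem_Icc]; omega
    · exact hSsub (Finset.mem_of_mem_erase h1)
  have hx_hull : x ∈ simplexHull d (Finset.Icc 1 n) :=
    mem_hull_of_rep (isRep_of_subset he hSσsub)
  have hpt_hullS : ptv x v lam ∈ simplexHull d S := mem_hull_of_rep hrepS
  have hpt_hull : ptv x v lam ∈ simplexHull d (Finset.Icc 1 n) :=
    hull_mono hSsub hpt_hullS
  have hseg : ∀ s, 0 ≤ s → s ≤ lam → ptv x v s ∈ simplexHull d (Finset.Icc 1 n) :=
    fun s h0 h1 => ptv_mem_of_endpoints x v h0 h1 hx_hull hpt_hull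
  -- cover the shifted point by T'
  obtain ⟨Sa, hSa, hptSa⟩ := exists_cover T' hpt_hull
  obtain ⟨wa, hwa⟩ := rep_of_mem_hull hptSa
  -- pointwise h at the shifted point
  have hpw := weaklyLower_pointwise (h S hS Sa hSa) hrepS hwa
  -- the walk from lam down to 0
  have hwalk := walk T' hm x hlam0 hseg hSa hptSa hS'h (mem_hull_of_rep ht)
  -- EE values
  have hEa : EE d Sa (ptv x v lam) = ∑ j ∈ Sa, wa j * (j:ℝ)^(d+1) :=
    EE_rep (T'.card_eq Sa hSa) (le_refl Sa) hwa
  have hEb : EE d S'h x = ∑ j ∈ S'h, t j * (j:ℝ)^(d+1) :=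
    EE_rep (T'.card_eq S'h hS'h) (le_refl S'h) ht
  -- final chain
  have hlhs : ∑ j ∈ Sσ, e j * (j:ℝ)^(d+1)
      = (∑ j ∈ S, eh j * (j:ℝ)^(d+1)) - lam * Dlt d m n := by
    rw [hsummS (fun j => (j:ℝ)^(d+1)), hsumσ (fun j => (j:ℝ)^(d+1)), Dlt, hlam]
    ring
  rw [hlhs]
  rw [hEa, hEb] at hwalk
  linarith

end AuxH

section AuxI

lemma main_red {n d : ℕ} (hn : d + 2 ≤ n)
    {T T' : Triangulation n d} {U U' : Triangulation (n-1) d}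
    (hU : U.simps = fSimps n T.simps) (hU' : U'.simps = fSimps n T'.simps)
    (h : le₂ T T')
    {Sσ Sτ : Finset ℕ} (hσ : Sσ ∈ U.simps) (hτ : Sτ ∈ U'.simps)
    {e t : ℕ → ℝ} {x : Fin d → ℝ}
    (he : isRep d Sσ e x) (ht : isRep d Sτ t x)
    (hred : e (n-1) = 0 ∨ t (n-1) = 0) :
    ∑ j ∈ Sσ, e j * (j:ℝ)^(d+1) ≤ ∑ j ∈ Sτ, t j * (j:ℝ)^(d+1) := by
  classical
  have hσsub : Sσ ⊆ Finset.Icc 1 (n-1) := U.subset_vertices Sσ hσ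
  have hτsub : Sτ ⊆ Finset.Icc 1 (n-1) := U'.subset_vertices Sτ hτ
  have hσf : Sσ ∈ fSimps n T.simps := by rw [← hU]; exact hσ
  have hτf : Sτ ∈ fSimps n T'.simps := by rw [← hU']; exact hτ
  by_cases htm : t (n-1) = 0
  · -- Case A: the τ-side value is realized by an honest T'-simplex at x
    obtain ⟨S'h, hS'h, ht', hsum'⟩ : ∃ S'h ∈ T'.simps, isRep d S'h t x ∧
        ∑ j ∈ Sτ, t j * (j:ℝ)^(d+1) = ∑ j ∈ S'h, t j * (j:ℝ)^(d+1) := by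
      rcases fSimps_cases hτf with ⟨hT', _⟩ | ⟨S', hS', hnS', hmS', hSτeq⟩
      · exact ⟨Sτ, hT', ht, rfl⟩
      · have hsupp : ∀ j, j ∉ S' → t j = 0 := by
          intro j hj
          by_cases hjm : j = n - 1
          · rw [hjm]; exact htm
          · refine ht.2.1 j ?_
            rw [hSτeq]
            intro hc
            rcases Finset.mem_insert.mp hc with h1 | h1
            · exact hjm h1
            · exact hj (Finset.mem_of_mem_erase h1)
        exact ⟨S', hS', rep_retarget ht hsupp,
          (rep_sum_eq ht hsupp (fun j => (j:ℝ)^(d+1))).symm⟩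
    rw [hsum']
    rcases fSimps_cases hσf with ⟨hσT, _⟩ | ⟨S, hST, hnS, hmS, hSσeq⟩
    · exact weaklyLower_pointwise (h Sσ hσT S'h hS'h) he ht'
    · rw [hSσeq] at he ⊢
      exact walk_case hn h hST hnS hmS hS'h he ht'
  · -- Case B: positive weight at n-1 on the τ-side; combinatorial dichotomy
    have htm0 : 0 < t (n-1) := lt_of_le_of_ne (ht.1 _) (Ne.symm htm)
    have hem : e (n-1) = 0 := by
      rcases hred with h1 | h1
      · exact h1
      · exact absurd h1 htm
    have hmτ : n - 1 ∈ Sτ := by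
      by_contra hc
      rw [ht.2.1 _ hc] at htm0
      exact lt_irrefl 0 htm0
    set D := Sσ ∪ Sτ with hD
    set c : ℕ → ℝ := fun j => e j - t j with hc
    have heD : isRep d D e x := isRep_of_subset he Finset.subset_union_left
    have htD : isRep d D t x := isRep_of_subset ht Finset.subset_union_right
    have horth : ∀ r : ℕ, r ≤ d → ∑ j ∈ D, c j * (j:ℝ)^r = 0 := by
      intro r hr
      have hsub : ∑ j ∈ D, c j * (j:ℝ)^r
          = (∑ j ∈ D, e j * (j:ℝ)^r) - ∑ j ∈ D, t j * (j:ℝ)^r := by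
        rw [← Finset.sum_sub_distrib]
        exact Finset.sum_congr rfl fun j _ => by rw [hc]; ring
      rw [hsub]
      rcases Nat.eq_zero_or_pos r with h0 | hpos
      · subst h0
        simp only [pow_zero, mul_one]
        rw [heD.2.2.1, htD.2.2.1]
        ring
      · have hk : r - 1 < d := by omega
        have h1 := heD.2.2.2 ⟨r-1, hk⟩
        have h2 := htD.2.2.2 ⟨r-1, hk⟩
        simp only at h1 h2
        have hr1 : r - 1 + 1 = r := by omega
        rw [hr1] at h1 h2
        rw [h1, h2]
        ring
    have hone : ∀ j ∈ D, 1 ≤ j := by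
      intro j hj
      rcases Finset.mem_union.mp hj with h1 | h1
      · exact (Finset.mem_Icc.mp (hσsub h1)).1
      · exact (Finset.mem_Icc.mp (hτsub h1)).1
    have hjle : ∀ j ∈ D, j ≤ n - 1 := by
      intro j hj
      rcases Finset.mem_union.mp hj with h1 | h1
      · exact (Finset.mem_Icc.mp (hσsub h1)).2
      · exact (Finset.mem_Icc.mp (hτsub h1)).2
    have ha0D : n - 1 ∈ D := Finset.mem_union_right _ hmτ
    have ha0neg : c (n-1) < 0 := by
      rw [hc]
      simp only
      rw [hem]
      linarith
    have ha0max : ∀ j ∈ D, c j ≠ 0 → j ≤ n - 1 := fun j hj _ => hjle j hj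
    rcases dichotomy D c hone horth ha0D ha0neg ha0max with
      ⟨b, hmono, hbD, hblt, hbsgn⟩ | hle
    · -- chain: contradiction with h
      exfalso
      -- positive chain entries lie in the T-host, negative in the T'-host
      have hbP : ∀ k, 0 < c (b k) → e (b k) ≠ 0 ∧ b k ∈ Sσ := by
        intro k hk
        rw [hc] at hk
        simp only at hk
        have ht0 := ht.1 (b k)
        have he0 : 0 < e (b k) := by linarith
        refine ⟨ne_of_gt he0, ?_⟩
        by_contra hcon
        rw [he.2.1 _ hcon] at he0
        exact lt_irrefl 0 he0
      have hbN : ∀ k, c (b k) < 0 → t (b k) ≠ 0 ∧ b k ∈ Sτ := by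
        intro k hk
        rw [hc] at hk
        simp only at hk
        have he0 := he.1 (b k)
        have ht0 : 0 < t (b k) := by linarith
        refine ⟨ne_of_gt ht0, ?_⟩
        by_contra hcon
        rw [ht.2.1 _ hcon] at ht0
        exact lt_irrefl 0 ht0
      obtain ⟨Th, hTh, hPin⟩ : ∃ Th ∈ T.simps, ∀ k, 0 < c (b k) → b k ∈ Th := by
        rcases fSimps_cases hσf with ⟨hσT, _⟩ | ⟨S, hST, hnS, hmS, hSσeq⟩
        · exact ⟨Sσ, hσT, fun k hk => (hbP k hk).2⟩
        · refine ⟨S, hST, fun k hk => ?_⟩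
          have h1 := (hbP k hk).2
          rw [hSσeq] at h1
          rcases Finset.mem_insert.mp h1 with h2 | h2
          · exfalso
            have := hblt k
            omega
          · exact Finset.mem_of_mem_erase h2
      obtain ⟨T'h, hT'h, hNin⟩ : ∃ T'h ∈ T'.simps, ∀ k, c (b k) < 0 → b k ∈ T'h := by
        rcases fSimps_cases hτf with ⟨hτT', _⟩ | ⟨S', hS', hnS', hmS', hSτeq⟩
        · exact ⟨Sτ, hτT', fun k hk => (hbN k hk).2⟩
        · refine ⟨S', hS', fun k hk => ?_⟩
          have h1 := (hbN k hk).2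
          rw [hSτeq] at h1
          rcases Finset.mem_insert.mp h1 with h2 | h2
          · exfalso
            have := hblt k
            omega
          · exact Finset.mem_of_mem_erase h2
      exact chain_contra (h Th hTh T'h hT'h) hmono hbsgn hPin hNin
    · -- the power-sum bound is exactly the goal
      have h1 : ∑ j ∈ D, e j * (j:ℝ)^(d+1) = ∑ j ∈ Sσ, e j * (j:ℝ)^(d+1) := by
        refine rep_sum_eq he ?_ _
        intro j hj
        exact he.2.1 j (fun hc' => hj (Finset.mem_union_left _ hc'))
      have h2 : ∑ j ∈ D, t j * (j:ℝ)^(d+1) = ∑ j ∈ Sτ, t j * (j:ℝ)^(d+1) := by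
        refine rep_sum_eq ht ?_ _
        intro j hj
        exact ht.2.1 j (fun hc' => hj (Finset.mem_union_right _ hc'))
      have h3 : ∑ j ∈ D, c j * (j:ℝ)^(d+1)
          = (∑ j ∈ D, e j * (j:ℝ)^(d+1)) - ∑ j ∈ D, t j * (j:ℝ)^(d+1) := by
        rw [← Finset.sum_sub_distrib]
        exact Finset.sum_congr rfl fun j _ => by rw [hc]; ring
      rw [h3, h1, h2] at hle
      linarith

end AuxI

section AuxJ

lemma shrink_sum {m : ℕ} {S : Finset ℕ} (hmS : m ∈ S) (w : ℕ → ℝ) (ε δ : ℝ)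
    (hδ : δ ≠ 0) (f : ℕ → ℝ) :
    ∑ j ∈ S, (if j = m then (w m - ε)/δ else w j / δ) * f j
      = ((∑ j ∈ S, w j * f j) - ε * f m)/δ := by
  classical
  rw [← Finset.sum_erase_add S _ hmS, ← Finset.sum_erase_add S (fun j => w j * f j) hmS]
  rw [if_pos rfl]
  have hcg : ∀ j ∈ S.erase m,
      (if j = m then (w m - ε)/δ else w j / δ) * f j = (w j * f j)/δ := by
    intro j hj
    rw [if_neg (Finset.mem_erase.mp hj).1, div_mul_eq_mul_div]
  rw [Finset.sum_congr rfl hcg, ← Finset.sum_div]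
  field_simp
  ring

lemma point_mass_sum {d m : ℕ} {S : Finset ℕ} {w : ℕ → ℝ} {x : Fin d → ℝ}
    (hw : isRep d S w x) (h1 : 1 ≤ w m) :
    ∑ j ∈ S, w j * (j:ℝ)^(d+1) = (m:ℝ)^(d+1) := by
  classical
  have hmS : m ∈ S := by
    by_contra hc
    rw [hw.2.1 m hc] at h1
    linarith
  have hsplit : ∑ j ∈ S.erase m, w j + w m = 1 := by
    rw [Finset.sum_erase_add S _ hmS]
    exact hw.2.2.1
  have hz : ∑ j ∈ S.erase m, w j = 0 := by
    have hnn : 0 ≤ ∑ j ∈ S.erase m, w j := Finset.sum_nonneg fun j _ => hw.1 j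
    linarith
  have hall : ∀ j ∈ S.erase m, w j = 0 :=
    (Finset.sum_eq_zero_iff_of_nonneg (fun j _ => hw.1 j)).mp hz
  have hwm : w m = 1 := by linarith
  rw [← Finset.sum_erase_add S _ hmS]
  have : ∀ j ∈ S.erase m, w j * (j:ℝ)^(d+1) = 0 := fun j hj => by
    rw [hall j hj, zero_mul]
  rw [Finset.sum_congr rfl this, Finset.sum_const, smul_zero, zero_add, hwm, one_mul]

lemma main_ineq {n d : ℕ} (hn : d + 2 ≤ n)
    {T T' : Triangulation n d} {U U' : Triangulation (n-1) d}
    (hU : U.simps = fSimps n T.simps) (hU' : U'.simps = fSimps n T'.simps)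
    (h : le₂ T T')
    {Sσ Sτ : Finset ℕ} (hσ : Sσ ∈ U.simps) (hτ : Sτ ∈ U'.simps)
    {e t : ℕ → ℝ} {x : Fin d → ℝ}
    (he : isRep d Sσ e x) (ht : isRep d Sτ t x) :
    ∑ j ∈ Sσ, e j * (j:ℝ)^(d+1) ≤ ∑ j ∈ Sτ, t j * (j:ℝ)^(d+1) := by
  classical
  set m := n - 1 with hm
  set ε := min (e m) (t m) with hε
  have hε0 : 0 ≤ ε := le_min (he.1 m) (ht.1 m)
  rcases eq_or_lt_of_le hε0 with hz | hpos
  · -- no common weight at n-1: already reduced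
    refine main_red hn hU hU' h hσ hτ he ht ?_
    rcases min_choice (e m) (t m) with h1 | h1
    · left; rw [← hm]; rw [← h1, ← hε, ← hz]
    · right; rw [← hm]; rw [← h1, ← hε, ← hz]
  · rcases lt_or_ge ε 1 with hε1 | hε1
    · -- strip the common weight ε at n-1
      have hδ : (0:ℝ) < 1 - ε := by linarith
      have hδ' : (1:ℝ) - ε ≠ 0 := ne_of_gt hδ
      have hmσ : m ∈ Sσ := by
        by_contra hc
        have := he.2.1 m hc
        rw [hε] at hpos
        have := min_le_left (e m) (t m)
        linarith [hpos]
      have hmτ : m ∈ Sτ := by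
        by_contra hc
        have := ht.2.1 m hc
        rw [hε] at hpos
        have := min_le_right (e m) (t m)
        linarith [hpos]
      set e' : ℕ → ℝ := fun j => if j = m then (e m - ε)/(1-ε) else e j / (1-ε) with he'
      set t' : ℕ → ℝ := fun j => if j = m then (t m - ε)/(1-ε) else t j / (1-ε) with ht'
      set q : Fin d → ℝ := fun k => (x k - ε * (m:ℝ)^(k.1+1))/(1-ε) with hq
      have hsum_e : ∀ f : ℕ → ℝ, ∑ j ∈ Sσ, e' j * f j
          = ((∑ j ∈ Sσ, e j * f j) - ε * f m)/(1-ε) := fun f => shrink_sum hmσ e ε _ hδ' f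
      have hsum_t : ∀ f : ℕ → ℝ, ∑ j ∈ Sτ, t' j * f j
          = ((∑ j ∈ Sτ, t j * f j) - ε * f m)/(1-ε) := fun f => shrink_sum hmτ t ε _ hδ' f
      have hrepe : isRep d Sσ e' q := by
        refine ⟨?_, ?_, ?_, ?_⟩
        · intro j
          simp only [he']
          split
          · apply div_nonneg _ (le_of_lt hδ)
            rw [hε]
            simp only [sub_nonneg]
            exact min_le_left _ _
          · exact div_nonneg (he.1 j) (le_of_lt hδ)
        · intro j hj
          simp only [he']
          rw [if_neg (fun hc => hj (by rw [hc]; exact hmσ)), he.2.1 j hj, zero_div]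
        · have := hsum_e (fun _ => 1)
          simp only [mul_one] at this
          rw [this, he.2.2.1]
          field_simp
        · intro k
          have := hsum_e (fun j => (j:ℝ)^(k.1+1))
          rw [this, he.2.2.2 k]
      have hrept : isRep d Sτ t' q := by
        refine ⟨?_, ?_, ?_, ?_⟩
        · intro j
          simp only [ht']
          split
          · apply div_nonneg _ (le_of_lt hδ)
            rw [hε]
            simp only [sub_nonneg]
            exact min_le_right _ _
          · exact div_nonneg (ht.1 j) (le_of_lt hδ)
        · intro j hj
          simp only [ht']
          rw [if_neg (fun hc => hj (by rw [hc]; exact hmτ)), ht.2.1 j hj, zero_div]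
        · have := hsum_t (fun _ => 1)
          simp only [mul_one] at this
          rw [this, ht.2.2.1]
          field_simp
        · intro k
          have := hsum_t (fun j => (j:ℝ)^(k.1+1))
          rw [this, ht.2.2.2 k]
      have hred' : e' (n-1) = 0 ∨ t' (n-1) = 0 := by
        rcases min_choice (e m) (t m) with h1 | h1
        · left
          show e' m = 0
          simp only [he', if_pos rfl]
          rw [← hε] at h1
          rw [← h1, sub_self, zero_div]
        · right
          show t' m = 0
          simp only [ht', if_pos rfl]
          rw [← hε] at h1
          rw [← h1, sub_self, zero_div]
      have hfin := main_red hn hU hU' h hσ hτ hrepe hrept hred'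
      rw [hsum_e (fun j => (j:ℝ)^(d+1)), hsum_t (fun j => (j:ℝ)^(d+1))] at hfin
      rw [div_le_div_iff_of_pos_right hδ] at hfin
      linarith
    · -- ε = 1 : the point is the vertex n-1 on both sides
      have h1e : 1 ≤ e m := le_trans hε1 (min_le_left _ _)
      have h1t : 1 ≤ t m := le_trans hε1 (min_le_right _ _)
      rw [point_mass_sum he h1e, point_mass_sum ht h1t]

end AuxJ

/-- the contraction `f(T) = del_T(n) ∪ del_{lk_T(n)}(n-1) ∗ {n-1}` is
order-preserving from `S₂(n,d)` to `S₂(n-1,d)`. -/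
theorem stmt_11 (n d : ℕ) (hn : d + 2 ≤ n)
    (T T' : Triangulation n d) (U U' : Triangulation (n - 1) d)
    (hU : U.simps = fSimps n T.simps) (hU' : U'.simps = fSimps n T'.simps)
    (h : le₂ T T') : le₂ U U' := by
  intro Sσ hσ Sτ hτ y hy z hz hproj
  obtain ⟨e, hey⟩ := rep_of_mem_hull hy
  obtain ⟨t, htz⟩ := rep_of_mem_hull hz
  -- the common projection and the downstairs representations
  set x : Fin d → ℝ := projLast y with hx
  have hex : isRep d Sσ e x := by
    refine ⟨hey.1, hey.2.1, hey.2.2.1, ?_⟩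
    intro k
    have := hey.2.2.2 k.castSucc
    simpa [hx, projLast] using this
  have htx : isRep d Sτ t x := by
    refine ⟨htz.1, htz.2.1, htz.2.2.1, ?_⟩
    intro k
    have := htz.2.2.2 k.castSucc
    rw [hproj]
    simpa [projLast] using this
  have hly : lastc y = ∑ j ∈ Sσ, e j * (j:ℝ)^(d+1) := by
    have h1 := hey.2.2.2 (Fin.last d)
    rw [lastc, ← h1]
    simp [Fin.val_last]
  have hlz : lastc z = ∑ j ∈ Sτ, t j * (j:ℝ)^(d+1) := by
    have h1 := htz.2.2.2 (Fin.last d)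
    rw [lastc, ← h1]
    simp [Fin.val_last]
  rw [hly, hlz]
  exact main_ineq hn hU hU' h hσ hτ hex htx
end

section
/- The minimal and maximal triangulations 0̂_{n,d} and 1̂_{n,d} of the cyclic polytope C(n,d) share no common interior (d-1)-simplex: every (d-1)-simplex that lies in both triangulations is contained in the boundary of C(n,d). -/
open Finset

lemma sign_prod (i : ℕ) (F : Finset ℕ) (hi : i ∉ F) :
    0 < (-1:ℝ)^((F.filter fun j => i < j).card) * ∏ j ∈ F, ((i:ℝ) - (j:ℝ)) := by
  induction F using Finset.induction with
  | empty => simp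
  | @insert a s ha ih =>
    have hia : i ≠ a := fun h => hi (h ▸ Finset.mem_insert_self a s)
    have his : i ∉ s := fun h => hi (Finset.mem_insert_of_mem h)
    have hp := ih his
    rw [Finset.filter_insert, Finset.prod_insert ha]
    by_cases hlt : i < a
    · rw [if_pos hlt, Finset.card_insert_of_notMem (fun h => ha (Finset.mem_of_mem_filter a h))]
      have hfa : (0:ℝ) < (a:ℝ) - i := by
        have : (i:ℝ) < a := by exact_mod_cast hlt
        linarith
      rw [pow_succ]
      nlinarith [mul_pos hfa hp]
    · have hai : a < i := by omega
      have hfa : (0:ℝ) < (i:ℝ) - a := by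
        have : (a:ℝ) < i := by exact_mod_cast hai
        linarith
      rw [if_neg hlt]
      nlinarith [mul_pos hfa hp]

lemma geom_frontier (d : ℕ) (V F : Finset ℕ) (hFV : F ⊆ V) (w : Fin d → ℝ) (c : ℝ)
    (hww : 0 < dotp w w)
    (hFc : ∀ i ∈ F, dotp w (mompt d i) = c)
    (hVc : ∀ i ∈ V, dotp w (mompt d i) ≤ c) :
    simplexHull d F ⊆ frontier (simplexHull d V) := by
  have hlin : IsLinearMap ℝ (fun x : Fin d → ℝ => dotp w x) := by
    constructor
    · intro x y; simp [dotp, mul_add, Finset.sum_add_distrib]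
    · intro r x
      simp only [dotp, Pi.smul_apply, smul_eq_mul, Finset.mul_sum]
      exact Finset.sum_congr rfl fun k _ => by ring
  have hsubV : simplexHull d F ⊆ simplexHull d V :=
    convexHull_mono (Set.image_mono (by exact_mod_cast hFV))
  have hhalf : simplexHull d V ⊆ {x | dotp w x ≤ c} :=
    convexHull_min (by rintro y ⟨i, hi, rfl⟩; exact hVc i (by exact_mod_cast hi))
      (convex_halfSpace_le hlin c)
  have hplane : simplexHull d F ⊆ {x | dotp w x = c} :=
    convexHull_min (by rintro y ⟨i, hi, rfl⟩; exact hFc i (by exact_mod_cast hi))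
      (convex_hyperplane hlin c)
  intro x hx
  refine ⟨subset_closure (hsubV hx), fun hint => ?_⟩
  rw [mem_interior_iff_mem_nhds, Metric.mem_nhds_iff] at hint
  obtain ⟨ε, hε, hball⟩ := hint
  have hw0 : w ≠ 0 := by
    intro h0; rw [h0] at hww; simp [dotp] at hww
  have hwnorm : 0 < ‖w‖ := norm_pos_iff.mpr hw0
  set t := ε / (2 * ‖w‖) with ht
  have ht0 : 0 < t := by positivity
  have hmem : x + t • w ∈ simplexHull d V := by
    apply hball
    rw [Metric.mem_ball, dist_eq_norm, add_sub_cancel_left, norm_smul,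
      Real.norm_eq_abs, abs_of_pos ht0]
    have htw : t * ‖w‖ = ε / 2 := by
      rw [ht]; field_simp
    rw [htw]; linarith
  have h1 := hhalf hmem
  have h2 : dotp w (x + t • w) = dotp w x + t * dotp w w := by
    simp only [dotp, Pi.add_apply, Pi.smul_apply, smul_eq_mul, mul_add,
      Finset.sum_add_distrib, Finset.mul_sum]
    congr 1
    exact Finset.sum_congr rfl fun k _ => by ring
  have h3 : dotp w x = c := hplane hx
  have := mul_pos ht0 hww
  simp only [Set.mem_setOf_eq] at h1
  linarith [h2 ▸ h1]

/-- every `(d-1)`-simplex common to the minimal and maximal triangulations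
of `C(n,d)` lies in the boundary of `C(n,d)`. -/
theorem stmt_18 (n d : ℕ) (hd : 0 < d) (hn : d + 1 ≤ n) (F : Finset ℕ)
    (hF : F.card = d)
    (h0 : ∃ S ∈ botOn d (Finset.Icc 1 n), F ⊆ S)
    (h1 : ∃ S ∈ topOn d (Finset.Icc 1 n), F ⊆ S) :
    simplexHull d F ⊆ frontier (simplexHull d (Finset.Icc 1 n)) := by
  classical
  set V := Finset.Icc 1 n with hVdef
  obtain ⟨S0, hS0m, hFS0⟩ := h0
  obtain ⟨S1, hS1m, hFS1⟩ := h1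
  rw [botOn, Finset.mem_filter, Finset.mem_powersetCard] at hS0m
  obtain ⟨⟨hS0V, hS0c⟩, hS0e⟩ := hS0m
  rw [topOn, Finset.mem_filter, Finset.mem_powersetCard] at hS1m
  obtain ⟨⟨hS1V, hS1c⟩, hS1o⟩ := hS1m
  have hFV : F ⊆ V := hFS0.trans hS0V
  -- extract the missing vertices
  have hcard0 : (S0 \ F).card = 1 := by rw [Finset.card_sdiff_of_subset hFS0, hS0c, hF]; omega
  have hcard1 : (S1 \ F).card = 1 := by rw [Finset.card_sdiff_of_subset hFS1, hS1c, hF]; omega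
  obtain ⟨a, ha⟩ := Finset.card_eq_one.mp hcard0
  obtain ⟨b, hb⟩ := Finset.card_eq_one.mp hcard1
  have haS0 : a ∈ S0 ∧ a ∉ F := by
    have : a ∈ S0 \ F := by rw [ha]; exact Finset.mem_singleton_self a
    exact Finset.mem_sdiff.mp this
  have hbS1 : b ∈ S1 ∧ b ∉ F := by
    have : b ∈ S1 \ F := by rw [hb]; exact Finset.mem_singleton_self b
    exact Finset.mem_sdiff.mp this
  have haV : a ∈ V := hS0V haS0.1
  have hbV : b ∈ V := hS1V hbS1.1
  have hS0eq : S0 = insert a F := by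
    rw [← Finset.union_sdiff_of_subset hFS0, ha, Finset.union_comm, ← Finset.insert_eq]
  have hS1eq : S1 = insert b F := by
    rw [← Finset.union_sdiff_of_subset hFS1, hb, Finset.union_comm, ← Finset.insert_eq]
  have hs0 : ∀ i, (S0.filter fun j => i < j).card =
      (F.filter fun j => i < j).card + (if i < a then 1 else 0) := by
    intro i; rw [hS0eq, Finset.filter_insert]; split_ifs with h
    · rw [Finset.card_insert_of_notMem (fun h' => haS0.2 (Finset.mem_of_mem_filter a h'))]
    · simp
  have hs1 : ∀ i, (S1.filter fun j => i < j).card =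
      (F.filter fun j => i < j).card + (if i < b then 1 else 0) := by
    intro i; rw [hS1eq, Finset.filter_insert]; split_ifs with h
    · rw [Finset.card_insert_of_notMem (fun h' => hbS1.2 (Finset.mem_of_mem_filter b h'))]
    · simp
  have facts : ∀ i ∈ V, i ∉ F →
      (i ≠ a → i < a → (F.filter fun j => i < j).card % 2 = 1) ∧
      (i ≠ a → ¬ i < a → (F.filter fun j => i < j).card % 2 = 0) ∧
      (i ≠ b → i < b → (F.filter fun j => i < j).card % 2 = 0) ∧
      (i ≠ b → ¬ i < b → (F.filter fun j => i < j).card % 2 = 1) := by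
    intro i hi hiF
    have n0 : i ≠ a → i ∉ S0 := fun hne => by rw [hS0eq]; simp [hne, hiF]
    have n1 : i ≠ b → i ∉ S1 := fun hne => by rw [hS1eq]; simp [hne, hiF]
    refine ⟨fun hne hlt => ?_, fun hne hlt => ?_, fun hne hlt => ?_, fun hne hlt => ?_⟩
    · have he := hS0e i (Finset.mem_sdiff.mpr ⟨hi, n0 hne⟩)
      rw [hs0, if_pos hlt, Nat.even_iff] at he; omega
    · have he := hS0e i (Finset.mem_sdiff.mpr ⟨hi, n0 hne⟩)
      rw [hs0, if_neg hlt, Nat.even_iff] at he; omega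
    · have ho := hS1o i (Finset.mem_sdiff.mpr ⟨hi, n1 hne⟩)
      rw [hs1, if_pos hlt, Nat.odd_iff] at ho; omega
    · have ho := hS1o i (Finset.mem_sdiff.mpr ⟨hi, n1 hne⟩)
      rw [hs1, if_neg hlt, Nat.odd_iff] at ho; omega
  -- parity of the number of elements of F above each missing vertex
  have hpar : (∀ i ∈ V, i ∉ F → Even ((F.filter fun j => i < j).card)) ∨
      (∀ i ∈ V, i ∉ F → Odd ((F.filter fun j => i < j).card)) := by
    by_cases hab : a = b
    · subst hab
      have honly : ∀ i ∈ V, i ∉ F → i = a := by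
        intro i hi hiF; by_contra hne
        obtain ⟨h1, h2, h3, h4⟩ := facts i hi hiF
        by_cases hlt : i < a
        · have := h1 hne hlt; have := h3 hne hlt; omega
        · have := h2 hne hlt; have := h4 hne hlt; omega
      rcases Nat.even_or_odd ((F.filter fun j => a < j).card) with h | h
      · left; intro i hi hiF; rw [honly i hi hiF]; exact h
      · right; intro i hi hiF; rw [honly i hi hiF]; exact h
    · obtain ⟨a1, a2, a3, a4⟩ := facts a haV haS0.2
      obtain ⟨b1, b2, b3, b4⟩ := facts b hbV hbS1.2
      rcases lt_or_gt_of_ne hab with hlt | hgt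
      · left; intro i hi hiF; rw [Nat.even_iff]
        have fa := a3 hab hlt
        have fb := b2 (Ne.symm hab) (by omega)
        rcases eq_or_ne i a with rfl | hia
        · exact fa
        rcases eq_or_ne i b with rfl | hib
        · exact fb
        obtain ⟨h1, h2, h3, h4⟩ := facts i hi hiF
        by_cases hia' : i < a
        · have := h1 hia hia'; have := h3 hib (by omega); omega
        · by_cases hib' : i < b
          · exact h2 hia hia'
          · have := h2 hia hia'; have := h4 hib hib'; omega
      · right; intro i hi hiF; rw [Nat.odd_iff]
        have fa := a4 hab (by omega)
        have fb := b1 (Ne.symm hab) hgt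
        rcases eq_or_ne i a with rfl | hia
        · exact fa
        rcases eq_or_ne i b with rfl | hib
        · exact fb
        obtain ⟨h1, h2, h3, h4⟩ := facts i hi hiF
        by_cases hib' : i < b
        · have := h1 hia (by omega); have := h3 hib hib'; omega
        · by_cases hia' : i < a
          · exact h1 hia hia'
          · have := h2 hia hia'; have := h4 hib hib'; omega
  -- the polynomial with roots F
  set P : Polynomial ℝ := ∏ j ∈ F, (Polynomial.X - Polynomial.C (j:ℝ)) with hP
  have hdeg : P.natDegree = d := by
    rw [hP, Polynomial.natDegree_prod _ _ (fun j _ => Polynomial.X_sub_C_ne_zero _)]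
    have h1 : ∑ i ∈ F, (Polynomial.X - Polynomial.C (i:ℝ)).natDegree = ∑ _i ∈ F, 1 :=
      Finset.sum_congr rfl fun j _ => Polynomial.natDegree_X_sub_C _
    rw [h1, Finset.sum_const, smul_eq_mul, mul_one, hF]
  have hlead : P.coeff d = 1 := by
    have hm : P.Monic :=
      Polynomial.monic_prod_of_monic _ _ fun j _ => Polynomial.monic_X_sub_C _
    have := hm.coeff_natDegree
    rwa [hdeg] at this
  have hevalF : ∀ i ∈ F, P.eval (i:ℝ) = 0 := by
    intro i hi
    rw [hP, Polynomial.eval_prod]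
    exact Finset.prod_eq_zero hi (by simp)
  have hevalP : ∀ i : ℕ, P.eval (i:ℝ) = ∏ j ∈ F, ((i:ℝ) - (j:ℝ)) := by
    intro i; simp [hP, Polynomial.eval_prod]
  -- choose the sign
  obtain ⟨ε, hε2, hεle⟩ : ∃ ε : ℝ, ε * ε = 1 ∧ ∀ i ∈ V, i ∉ F → ε * P.eval (i:ℝ) ≤ 0 := by
    rcases hpar with h | h
    · refine ⟨-1, by norm_num, fun i hi hiF => ?_⟩
      have hs := sign_prod i F hiF
      rw [(h i hi hiF).neg_one_pow, one_mul] at hs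
      rw [hevalP]; linarith
    · refine ⟨1, by norm_num, fun i hi hiF => ?_⟩
      have hs := sign_prod i F hiF
      rw [(h i hi hiF).neg_one_pow] at hs
      rw [hevalP, one_mul]; linarith
  set w : Fin d → ℝ := fun k => ε * P.coeff (k.1 + 1) with hw
  set c : ℝ := -(ε * P.coeff 0) with hc
  have hdot : ∀ i : ℕ, dotp w (mompt d i) = ε * P.eval (i:ℝ) - ε * P.coeff 0 := by
    intro i
    have he : P.eval (i:ℝ) = ∑ k ∈ Finset.range (d + 1), P.coeff k * (i:ℝ) ^ k :=
      Polynomial.eval_eq_sum_range' (by omega) _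
    rw [Finset.sum_range_succ'] at he
    have hfin : (∑ k : Fin d, w k * mompt d i k) =
        ∑ k ∈ Finset.range d, ε * P.coeff (k + 1) * (i:ℝ) ^ (k + 1) :=
      Fin.sum_univ_eq_sum_range (fun k => ε * P.coeff (k + 1) * (i:ℝ) ^ (k + 1)) d
    have hdef : dotp w (mompt d i) = ∑ k : Fin d, w k * mompt d i k := rfl
    rw [hdef, hfin]
    have hmul : ∑ k ∈ Finset.range d, ε * P.coeff (k + 1) * (i:ℝ) ^ (k + 1)
        = ε * ∑ k ∈ Finset.range d, P.coeff (k + 1) * (i:ℝ) ^ (k + 1) := by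
      rw [Finset.mul_sum]
      exact Finset.sum_congr rfl fun k _ => by ring
    have hsum : ∑ k ∈ Finset.range d, P.coeff (k + 1) * (i:ℝ) ^ (k + 1)
        = P.eval (i:ℝ) - P.coeff 0 := by
      rw [he]; simp
    rw [hmul, hsum]; ring
  have hFc : ∀ i ∈ F, dotp w (mompt d i) = c := by
    intro i hi
    rw [hdot i, hevalF i hi, hc]; ring
  have hVc : ∀ i ∈ V, dotp w (mompt d i) ≤ c := by
    intro i hi
    by_cases hiF : i ∈ F
    · exact le_of_eq (hFc i hiF)
    · have := hεle i hi hiF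
      rw [hdot i, hc]; linarith
  have hww : 0 < dotp w w := by
    have hdef : dotp w w = ∑ k : Fin d, w k * w k := rfl
    rw [hdef]
    apply Finset.sum_pos' (fun k _ => mul_self_nonneg (w k))
    refine ⟨⟨d - 1, by omega⟩, Finset.mem_univ _, ?_⟩
    have hwk : w ⟨d - 1, by omega⟩ = ε := by
      rw [hw]
      simp only
      rw [show (d - 1) + 1 = d from by omega, hlead, mul_one]
    rw [hwk, hε2]; norm_num
  exact geom_frontier d V F hFV w c hww hFc hVc
end
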